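/- arXiv:1711.03524 — 5 statements merged into one kernel-verified Lean document; each statement's English description precedes it below -/
import Mathlib

section
/- Let $Q$ be a polynomial in $n$ variables of degree at most $d$, and define $\|Q\|_I := \sup_{x,x' \in I} |Q(x)-Q(x')|$ for bounded sets $I$. Then for any $x \in \mathbb{R}^n$ and $0 < r \leq R$, one has $\|Q\|_{B(x,R)} \leq C_{d,n} (R/r)^d \|Q\|_{B(x,r)}$ for a constant $C_{d,n}$ depending only on $d$ and $n$. -/
/-!
Restrict `Q` to the line through the centre `x` and a point `a ∈ B(x, R)`, parametrised so that
the result is a polynomial `p` of degree `≤ d` with `p 0 = Q x`, `p s = Q a` for `s = d R / r`,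
and `p j` a value of `Q` on `B(x, r)` for every node `j = 0, …, d`. Lagrange interpolation at
these nodes writes `p s - p 0` as a combination of the `d + 1` differences `p j - p 0`, each at
most `‖Q‖_{B(x,r)}`, with weights bounded by `s ^ d`. The triangle inequality through `Q x` then
gives the claim with `C = 2 (d + 1) d ^ d`.
-/

/-- The seminorm `‖Q‖_I := sup_{x,x' ∈ I} |Q(x)-Q(x')|` of a polynomial on a set `I`. -/
noncomputable def polySeminorm (n : ℕ) (Q : MvPolynomial (Fin n) ℝ)
    (I : Set (EuclideanSpace ℝ (Fin n))) : ℝ :=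
  sSup {t : ℝ | ∃ a ∈ I, ∃ b ∈ I,
    t = |MvPolynomial.eval (fun i => a i) Q - MvPolynomial.eval (fun i => b i) Q|}

open Polynomial

namespace MvPolynomial

variable {R σ : Type*} [CommSemiring R]

theorem natDegree_aeval_le_totalDegree (Q : MvPolynomial σ R) {g : σ → R[X]}
    (hg : ∀ i, (g i).natDegree ≤ 1) : (aeval g Q).natDegree ≤ Q.totalDegree := by
  conv_lhs => rw [Q.as_sum, map_sum]
  refine natDegree_sum_le_of_forall_le _ _ fun m hm => ?_
  rw [aeval_monomial, Polynomial.algebraMap_eq]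
  refine (natDegree_C_mul_le _ _).trans <| (natDegree_prod_le _ _).trans ?_
  refine le_trans (Finset.sum_le_sum fun i _ => ?_) (le_totalDegree hm)
  simpa using natDegree_pow_le_of_le (m i) (hg i)

theorem polynomial_eval_aeval (Q : MvPolynomial σ R) (g : σ → R[X]) (t : R) :
    (aeval g Q).eval t = eval (fun i => (g i).eval t) Q := by
  rw [aeval_def, polynomial_eval_eval₂, show (evalRingHom t).comp (algebraMap R R[X]) = .id R by
    ext; simp]
  rfl

theorem exists_natDegree_le_eval_eq_eval_line (Q : MvPolynomial σ R) (x y : σ → R) :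
    ∃ p : R[X], p.natDegree ≤ Q.totalDegree ∧ ∀ t, p.eval t = eval (x + t • y) Q := by
  refine ⟨aeval (fun i => Polynomial.C (y i) * Polynomial.X + Polynomial.C (x i)) Q,
    natDegree_aeval_le_totalDegree Q fun _ => natDegree_linear_le, fun t => ?_⟩
  rw [polynomial_eval_aeval]
  congr with i
  simp only [Polynomial.eval_add, Polynomial.eval_mul, Polynomial.eval_C, Polynomial.eval_X,
    Pi.add_apply, Pi.smul_apply, smul_eq_mul]
  ring

end MvPolynomial

namespace Polynomial

open Finset

theorem abs_eval_lagrangeBasis_range_le {d j : ℕ} (hj : j ∈ range (d + 1)) {s : ℝ}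
    (hs : d ≤ s) :
    |(Lagrange.basis (range (d + 1)) (fun k : ℕ => (k : ℝ)) j).eval s| ≤ s ^ d := by
  rw [Lagrange.basis, eval_prod, abs_prod]
  calc ∏ k ∈ (range (d + 1)).erase j, |(Lagrange.basisDivisor (j : ℝ) k).eval s|
      ≤ ∏ _k ∈ (range (d + 1)).erase j, s := by
        refine prod_le_prod (fun _ _ => abs_nonneg _) fun k hk => ?_
        obtain ⟨hkj, hk⟩ := mem_erase.mp hk
        have hk : (k : ℝ) ≤ d := by exact_mod_cast Nat.lt_succ_iff.mp (mem_range.mp hk)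
        have hgap : 1 ≤ |(j : ℝ) - k| := by
          rcases Nat.lt_or_gt_of_ne hkj with h | h
          · have h : (k : ℝ) + 1 ≤ j := by exact_mod_cast h
            exact le_abs.mpr (.inl (by linarith))
          · have h : (j : ℝ) + 1 ≤ k := by exact_mod_cast h
            exact le_abs.mpr (.inr (by linarith))
        rw [Lagrange.basisDivisor, eval_mul, eval_C, eval_sub, eval_X, eval_C, abs_mul, abs_inv,
          abs_of_nonneg (by linarith : 0 ≤ s - k)]
        calc |(j : ℝ) - k|⁻¹ * (s - k) ≤ 1 * s := by
              gcongr
              · linarith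
              · exact inv_le_one_of_one_le₀ hgap
              · linarith [k.cast_nonneg (α := ℝ)]
          _ = s := one_mul s
    _ = s ^ d := by rw [prod_const, card_erase_of_mem hj, card_range]; rfl

theorem eval_sub_eval_zero_eq_sum_lagrangeBasis {p : ℝ[X]} {d : ℕ} (hp : p.natDegree ≤ d)
    (s : ℝ) :
    p.eval s - p.eval 0 = ∑ j ∈ range (d + 1), (p.eval (j : ℝ) - p.eval 0) *
      (Lagrange.basis (range (d + 1)) (fun k : ℕ => (k : ℝ)) j).eval s := by
  set q := p - C (p.eval 0)
  have hq : q.degree < #(range (d + 1)) := by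
    refine degree_le_natDegree.trans_lt ?_
    rw [natDegree_sub_C, card_range]
    exact_mod_cast Nat.lt_succ_of_le hp
  have := congrArg (eval s) (Lagrange.eq_interpolate Nat.cast_injective.injOn hq)
  simpa [q, Lagrange.interpolate_apply, eval_finsetSum] using this

theorem abs_eval_sub_eval_zero_le {p : ℝ[X]} {d : ℕ} {s N : ℝ} (hp : p.natDegree ≤ d)
    (hs : d ≤ s) (hN : ∀ j ≤ d, |p.eval (j : ℝ) - p.eval 0| ≤ N) :
    |p.eval s - p.eval 0| ≤ (d + 1) * s ^ d * N := by
  rw [eval_sub_eval_zero_eq_sum_lagrangeBasis hp]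
  calc _ ≤ ∑ j ∈ range (d + 1), |(p.eval (j : ℝ) - p.eval 0) *
        (Lagrange.basis (range (d + 1)) (fun k : ℕ => (k : ℝ)) j).eval s| :=
        abs_sum_le_sum_abs _ _
    _ ≤ ∑ _j ∈ range (d + 1), N * s ^ d := by
        refine sum_le_sum fun j hj => ?_
        rw [abs_mul]
        exact mul_le_mul (hN j (Nat.lt_succ_iff.mp (mem_range.mp hj)))
          (abs_eval_lagrangeBasis_range_le hj hs) (abs_nonneg _)
          ((abs_nonneg _).trans (hN 0 d.zero_le))
    _ = (d + 1) * s ^ d * N := by rw [sum_const, card_range, nsmul_eq_mul]; push_cast; ring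

end Polynomial

theorem add_smul_sub_mem_ball {E : Type*} [SeminormedAddCommGroup E] [NormedSpace ℝ E]
    {x a : E} {r R t : ℝ} (ha : a ∈ Metric.ball x R) (hr : 0 < r) (ht : 0 ≤ t)
    (htR : t * R ≤ r) : x + t • (a - x) ∈ Metric.ball x r := by
  rw [Metric.mem_ball, dist_eq_norm, add_sub_cancel_left, norm_smul, Real.norm_of_nonneg ht]
  rw [Metric.mem_ball, dist_eq_norm] at ha
  rcases ht.eq_or_lt with rfl | ht
  · simpa using hr
  · exact (mul_lt_mul_of_pos_left ha ht).trans_le htR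

section PolySeminorm

open MvPolynomial

variable {n : ℕ} (Q : MvPolynomial (Fin n) ℝ)

theorem polySeminorm_nonneg {I : Set (EuclideanSpace ℝ (Fin n))} : 0 ≤ polySeminorm n Q I :=
  Real.sSup_nonneg <| by rintro _ ⟨a, -, b, -, rfl⟩; exact abs_nonneg _

theorem polySeminorm_le {I : Set (EuclideanSpace ℝ (Fin n))} {M : ℝ} (hM : 0 ≤ M)
    (h : ∀ a ∈ I, ∀ b ∈ I, |eval (fun i => a i) Q - eval (fun i => b i) Q| ≤ M) :
    polySeminorm n Q I ≤ M :=
  Real.sSup_le (by rintro _ ⟨a, ha, b, hb, rfl⟩; exact h a ha b hb) hM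

theorem abs_eval_sub_le_polySeminorm {I : Set (EuclideanSpace ℝ (Fin n))}
    (hI : Bornology.IsBounded I) {a b : EuclideanSpace ℝ (Fin n)} (ha : a ∈ I) (hb : b ∈ I) :
    |eval (fun i => a i) Q - eval (fun i => b i) Q| ≤ polySeminorm n Q I := by
  have hQ : Continuous fun a : EuclideanSpace ℝ (Fin n) => eval (fun i => a i) Q :=
    (continuous_eval Q).comp (PiLp.continuous_ofLp 2 _)
  have hf : Continuous fun p : EuclideanSpace ℝ (Fin n) × EuclideanSpace ℝ (Fin n) =>
      |eval (fun i => p.1 i) Q - eval (fun i => p.2 i) Q| :=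
    ((hQ.comp continuous_fst).sub (hQ.comp continuous_snd)).abs
  refine le_csSup (((hI.isCompact_closure.prod hI.isCompact_closure).image hf).bddAbove.mono ?_)
    ⟨a, ha, b, hb, rfl⟩
  rintro _ ⟨a, ha, b, hb, rfl⟩
  exact ⟨(a, b), ⟨subset_closure ha, subset_closure hb⟩, rfl⟩

theorem abs_eval_sub_eval_center_le_polySeminorm {d : ℕ} (hd : 1 ≤ d) (hQ : Q.totalDegree ≤ d)
    {x a : EuclideanSpace ℝ (Fin n)} {r R : ℝ} (hr : 0 < r) (hrR : r ≤ R)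
    (ha : a ∈ Metric.ball x R) :
    |eval (fun i => a i) Q - eval (fun i => x i) Q| ≤
      (d + 1) * (d * (R / r)) ^ d * polySeminorm n Q (Metric.ball x r) := by
  have hR := hr.trans_le hrR
  set s : ℝ := d * (R / r)
  have hds : (d : ℝ) ≤ s := le_mul_of_one_le_right d.cast_nonneg ((one_le_div hr).mpr hrR)
  have hs : 0 < s := (Nat.cast_pos.mpr hd).trans_le hds
  set y := s⁻¹ • (a - x)
  obtain ⟨p, hpd, hline⟩ := Q.exists_natDegree_le_eval_eq_eval_line (fun i => x i) (fun i => y i)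
  have hp : ∀ t : ℝ, p.eval t = eval (fun i => (x + t • y) i) Q := fun t => by
    rw [hline]; congr with i
  have hpa : p.eval s = eval (fun i => a i) Q := by
    rw [hp, show x + s • y = a by simp [y, smul_smul, hs.ne']]
  have hpx : p.eval 0 = eval (fun i => x i) Q := by rw [hp, zero_smul, add_zero]
  rw [← hpa, ← hpx]
  refine abs_eval_sub_eval_zero_le (hpd.trans hQ) hds fun j hj => ?_
  rw [hpx, hp, smul_smul]
  refine abs_eval_sub_le_polySeminorm Q Metric.isBounded_ball
    (add_smul_sub_mem_ball ha hr (by positivity) ?_) (Metric.mem_ball_self hr)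
  calc (j : ℝ) * s⁻¹ * R ≤ d * s⁻¹ * R := by gcongr
    _ = r := by simp only [s]; field_simp

end PolySeminorm

theorem stmt_0_general (d n : ℕ) (hd : 1 ≤ d) :
    ∃ C : ℝ, 0 < C ∧ ∀ (Q : MvPolynomial (Fin n) ℝ), Q.totalDegree ≤ d →
      ∀ (x : EuclideanSpace ℝ (Fin n)) (r R : ℝ), 0 < r → r ≤ R →
        polySeminorm n Q (Metric.ball x R) ≤
          C * (R / r) ^ d * polySeminorm n Q (Metric.ball x r) := by
  refine ⟨2 * (d + 1) * d ^ d, by positivity, fun Q hQ x r R hr hrR => ?_⟩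
  have hR := hr.trans_le hrR
  have hN := polySeminorm_nonneg Q (I := Metric.ball x r)
  refine polySeminorm_le Q (by positivity) fun a ha b hb => ?_
  set F := fun z : EuclideanSpace ℝ (Fin n) => MvPolynomial.eval (fun i => z i) Q
  have hax : |F a - F x| ≤ _ := abs_eval_sub_eval_center_le_polySeminorm Q hd hQ hr hrR ha
  have hbx : |F b - F x| ≤ _ := abs_eval_sub_eval_center_le_polySeminorm Q hd hQ hr hrR hb
  calc |F a - F b| ≤ |F a - F x| + |F b - F x| := abs_sub_comm (F x) (F b) ▸ abs_sub_le _ _ _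
    _ ≤ _ := add_le_add hax hbx
    _ = _ := by ring

theorem stmt_0 (d n : ℕ) (hd : 1 ≤ d) (hn : 1 ≤ n) :
    ∃ C : ℝ, 0 < C ∧ ∀ (Q : MvPolynomial (Fin n) ℝ), Q.totalDegree ≤ d →
      ∀ (x : EuclideanSpace ℝ (Fin n)) (r R : ℝ), 0 < r → r ≤ R →
        polySeminorm n Q (Metric.ball x R) ≤
          C * (R / r) ^ d * polySeminorm n Q (Metric.ball x r) :=
  stmt_0_general d n hd
end

section
/- Let $Q$ be a polynomial in $n$ variables of degree at most $d$, and define $\|Q\|_I := \sup_{x,x' \in I} |Q(x)-Q(x')|$. Then for any $x \in \mathbb{R}^n$ and $0 < r \leq R$, one has $\|Q\|_{B(x,r)} \leq C_{d,n} (r/R) \|Q\|_{B(x,R)}$ for a constant $C_{d,n}$ depending only on $d$ and $n$. -/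
/-!
After the affine substitution `y ↦ x + R • y`, which preserves the degree, it suffices to compare
the oscillations of a polynomial `p` of degree `≤ d` on the balls `B(0, ρ)` and `B(0, 1)`. Drop the
constant term of `p` and record the remaining coefficients in a vector `c` of the finite-dimensional
space `ℝ^S`, `S` the set of nonzero multi-indices of degree `≤ d`. Every remaining monomial has
degree `≥ 1`, so for `ρ ≤ 1` it is bounded by `ρ` on `B(0, ρ)`, and the oscillation on `B(0, ρ)` is
at most `2 |S| ρ ‖c‖`. On the other hand the oscillation on `B(0, 1)` is a norm of `c`: it is a
continuous, positively homogeneous function of `c`, and if it vanishes then `p`, which vanishes at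
`0`, vanishes near `0`, so `p = 0`. By compactness of the unit sphere of `ℝ^S` it is bounded below
by `m ‖c‖` for some `m > 0`.
-/

open MvPolynomial Metric Filter Topology

noncomputable def osc {E : Type*} (f : E → ℝ) (s : Set E) : ℝ :=
  sSup {t : ℝ | ∃ a ∈ s, ∃ b ∈ s, t = |f a - f b|}

section Oscillation

variable {E F : Type*} {f g : E → ℝ} {s : Set E}

theorem osc_nonneg (f : E → ℝ) (s : Set E) : 0 ≤ osc f s :=
  Real.sSup_nonneg <| by rintro _ ⟨a, -, b, -, rfl⟩; exact abs_nonneg _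

theorem osc_le {M : ℝ} (hM : 0 ≤ M) (h : ∀ a ∈ s, ∀ b ∈ s, |f a - f b| ≤ M) : osc f s ≤ M :=
  Real.sSup_le (by rintro _ ⟨a, ha, b, hb, rfl⟩; exact h a ha b hb) hM

theorem osc_le_two_mul {M : ℝ} (hM : 0 ≤ M) (h : ∀ a ∈ s, |f a| ≤ M) : osc f s ≤ 2 * M :=
  osc_le (by positivity) fun a ha b hb =>
    (abs_sub _ _).trans (by linarith [h a ha, h b hb])

theorem abs_sub_le_osc {M : ℝ} (hf : ∀ a ∈ s, |f a| ≤ M) {a b : E} (ha : a ∈ s) (hb : b ∈ s) :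
    |f a - f b| ≤ osc f s :=
  le_csSup ⟨2 * M, by
    rintro _ ⟨a, ha, b, hb, rfl⟩
    exact (abs_sub _ _).trans (by linarith [hf a ha, hf b hb])⟩ ⟨a, ha, b, hb, rfl⟩

theorem osc_add_le {M N : ℝ} (hf : ∀ a ∈ s, |f a| ≤ M) (hg : ∀ a ∈ s, |g a| ≤ N) :
    osc (f + g) s ≤ osc f s + osc g s :=
  osc_le (add_nonneg (osc_nonneg f s) (osc_nonneg g s)) fun a ha b hb =>
    calc |(f + g) a - (f + g) b| = |(f a - f b) + (g a - g b)| := by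
          rw [Pi.add_apply, Pi.add_apply, add_sub_add_comm]
      _ ≤ |f a - f b| + |g a - g b| := abs_add_le _ _
      _ ≤ osc f s + osc g s := add_le_add (abs_sub_le_osc hf ha hb) (abs_sub_le_osc hg ha hb)

theorem osc_const_mul {t : ℝ} (ht : 0 ≤ t) (f : E → ℝ) (s : Set E) :
    osc (fun x => t * f x) s = t * osc f s := by
  rw [osc, osc, ← smul_eq_mul, ← Real.sSup_smul_of_nonneg ht]
  congr 1
  ext u
  simp only [Set.mem_smul_set, Set.mem_ofPred_eq, smul_eq_mul]
  constructor
  · rintro ⟨a, ha, b, hb, rfl⟩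
    exact ⟨_, ⟨a, ha, b, hb, rfl⟩, by rw [← mul_sub, abs_mul, abs_of_nonneg ht]⟩
  · rintro ⟨_, ⟨a, ha, b, hb, rfl⟩, rfl⟩
    exact ⟨a, ha, b, hb, by rw [← mul_sub, abs_mul, abs_of_nonneg ht]⟩

theorem osc_sub_const (f : E → ℝ) (k : ℝ) (s : Set E) : osc (fun x => f x - k) s = osc f s := by
  simp only [osc, sub_sub_sub_cancel_right]

theorem osc_comp (f : F → ℝ) (g : E → F) (s : Set E) : osc (f ∘ g) s = osc f (g '' s) := by
  simp only [osc, Set.exists_mem_image, Function.comp_apply]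

end Oscillation

theorem exists_pos_mul_norm_le {E : Type*} [NormedAddCommGroup E] [NormedSpace ℝ E]
    [FiniteDimensional ℝ E] {N : E → ℝ} (hN : Continuous N)
    (hsmul : ∀ t : ℝ, 0 < t → ∀ v, N (t • v) = t * N v) (hpos : ∀ v ≠ 0, 0 < N v) :
    ∃ m > 0, ∀ v, m * ‖v‖ ≤ N v := by
  have hN0 : N 0 = 0 := by
    have h := hsmul 2 two_pos 0
    rw [smul_zero] at h
    linarith
  rcases subsingleton_or_nontrivial E with hE | hE
  · exact ⟨1, one_pos, fun v => by simp [Subsingleton.elim v 0, hN0]⟩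
  obtain ⟨u₀, hu₀, hmin⟩ := (isCompact_sphere (0 : E) 1).exists_isMinOn
    (NormedSpace.sphere_nonempty.mpr zero_le_one) hN.continuousOn
  refine ⟨N u₀, hpos u₀ (ne_zero_of_mem_unit_sphere ⟨u₀, hu₀⟩), fun v => ?_⟩
  rcases eq_or_ne v 0 with rfl | hv
  · simp [hN0]
  have hv' : 0 < ‖v‖ := norm_pos_iff.mpr hv
  have hu : ‖v‖⁻¹ • v ∈ sphere (0 : E) 1 := by
    simp [norm_smul, hv'.ne']
  calc N u₀ * ‖v‖ ≤ N (‖v‖⁻¹ • v) * ‖v‖ := mul_le_mul_of_nonneg_right (hmin hu) hv'.le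
    _ = N v := by rw [hsmul _ (inv_pos.mpr hv')]; field_simp

namespace MvPolynomial

theorem totalDegree_bind₁_le {σ τ R : Type*} [CommSemiring R] {f : σ → MvPolynomial τ R}
    (hf : ∀ i, (f i).totalDegree ≤ 1) (p : MvPolynomial σ R) :
    (bind₁ f p).totalDegree ≤ p.totalDegree := by
  conv_lhs => rw [p.as_sum, map_sum]
  refine totalDegree_finsetSum_le fun α hα => ?_
  rw [bind₁_monomial]
  calc (C (coeff α p) * ∏ i ∈ α.support, f i ^ α i).totalDegree
      ≤ ∑ i ∈ α.support, (f i ^ α i).totalDegree := by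
        refine (totalDegree_mul _ _).trans ?_
        rw [totalDegree_C, zero_add]
        exact totalDegree_finsetProd _ _
    _ ≤ ∑ i ∈ α.support, α i := Finset.sum_le_sum fun i _ =>
        (totalDegree_pow _ _).trans (by simpa using Nat.mul_le_mul_left (α i) (hf i))
    _ ≤ p.totalDegree := le_totalDegree hα

theorem totalDegree_C_add_C_mul_X_le {σ R : Type*} [CommSemiring R] [Nontrivial R] (a b : R)
    (i : σ) : (C a + C b * X i : MvPolynomial σ R).totalDegree ≤ 1 :=
  (totalDegree_add _ _).trans (max_le (by simp) ((totalDegree_mul _ _).trans (by simp)))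

theorem eval_bind₁ {σ τ R : Type*} [CommSemiring R] (f : σ → MvPolynomial τ R) (y : τ → R)
    (p : MvPolynomial σ R) : eval y (bind₁ f p) = eval (fun i => eval y (f i)) p :=
  aeval_bind₁ y f p

theorem eq_zero_of_eventually_eval_eq_zero {σ 𝕜 : Type*} [NontriviallyNormedField 𝕜]
    {p : MvPolynomial σ 𝕜} (h : ∀ᶠ y in 𝓝 0, eval y p = 0) : p = 0 := by
  refine MvPolynomial.funext fun y => ?_
  set q : Polynomial 𝕜 := aeval (fun i => Polynomial.C (y i) * Polynomial.X) p
  have hq : ∀ t, q.eval t = eval (t • y) p := fun t => by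
    rw [← Polynomial.coe_aeval_eq_eval, ← AlgHom.comp_apply, comp_aeval]
    show _ = aeval (t • y) p
    congr 2
    funext i
    simpa using mul_comm (y i) t
  have hline : Tendsto (fun t : 𝕜 => t • y) (𝓝 0) (𝓝 0) := by
    simpa using (tendsto_id (x := 𝓝 (0 : 𝕜))).smul_const y
  have hroots : {t | q.IsRoot t}.Infinite :=
    infinite_of_mem_nhds 0 ((hline.eventually h).mono fun t ht => by simpa [hq] using ht)
  simpa [hq] using congrArg (Polynomial.eval 1) (Polynomial.eq_zero_of_infinite_isRoot q hroots)

theorem support_sub_C_coeff_zero_subset {σ R : Type*} [CommRing R] {p : MvPolynomial σ R}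
    {d : ℕ} (hp : p.totalDegree ≤ d) :
    ↑(p - C (coeff 0 p)).support ⊆ {α : σ →₀ ℕ | α.degree ≤ d ∧ α ≠ 0} := by
  classical
  intro α hα
  rw [Finset.mem_coe, mem_support_iff, coeff_sub, coeff_C] at hα
  have hα0 : α ≠ 0 := by rintro rfl; simp at hα
  refine ⟨(le_totalDegree (mem_support_iff.mpr fun h => hα ?_)).trans hp, hα0⟩
  simp [h, Ne.symm hα0]

theorem abs_eval_monomial_le {σ : Type*} {y : σ → ℝ} {M : ℝ} (hy : ∀ i, |y i| ≤ M)
    (α : σ →₀ ℕ) (r : ℝ) : |eval y (monomial α r)| ≤ |r| * M ^ α.degree := by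
  rw [eval_monomial, abs_mul, Finsupp.prod, Finset.abs_prod, Finsupp.degree_apply,
    ← Finset.prod_pow_eq_pow_sum]
  gcongr with i
  rw [abs_pow]
  exact pow_le_pow_left₀ (abs_nonneg _) (hy i) _

variable {σ : Type*} (S : Finset (σ →₀ ℕ))

noncomputable def ofCoeffs : (S → ℝ) →ₗ[ℝ] MvPolynomial σ ℝ :=
  Fintype.linearCombination ℝ fun α : S => monomial α.1 1

variable {S}

theorem coeff_ofCoeffs (c : S → ℝ) (α : S) : coeff α.1 (ofCoeffs S c) = c α := by
  classical
  simp [ofCoeffs, Fintype.linearCombination_apply, coeff_sum, coeff_monomial]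

theorem ofCoeffs_coeff {p : MvPolynomial σ ℝ} (hp : p.support ⊆ S) :
    ofCoeffs S (fun α => coeff α.1 p) = p := by
  ext β
  by_cases hβ : β ∈ S
  · exact coeff_ofCoeffs _ ⟨β, hβ⟩
  · have hα : ∀ α : S, α.1 ≠ β := fun α h => hβ (h ▸ α.2)
    classical
    simp [ofCoeffs, Fintype.linearCombination_apply, coeff_sum, coeff_monomial, hα,
      notMem_support_iff.mp fun h => hβ (hp h)]

theorem abs_eval_ofCoeffs_le (hS : 0 ∉ S) {y : σ → ℝ} {M : ℝ} (hM₀ : 0 ≤ M) (hM₁ : M ≤ 1)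
    (hy : ∀ i, |y i| ≤ M) (c : S → ℝ) : |eval y (ofCoeffs S c)| ≤ M * ∑ α, ‖c α‖ := by
  rw [ofCoeffs, Fintype.linearCombination_apply, map_sum, Finset.mul_sum]
  refine (Finset.abs_sum_le_sum_abs _ _).trans (Finset.sum_le_sum fun α _ => ?_)
  rw [smul_monomial, smul_eq_mul, mul_one, mul_comm M, Real.norm_eq_abs]
  refine (abs_eval_monomial_le hy _ _).trans (mul_le_mul_of_nonneg_left ?_ (abs_nonneg _))
  have hα : α.1.degree ≠ 0 := fun h => hS ((Finsupp.degree_eq_zero_iff _).mp h ▸ α.2)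
  exact pow_le_of_le_one hM₀ hM₁ hα

end MvPolynomial

section CoeffOsc

variable {σ : Type*} [Fintype σ] {S : Finset (σ →₀ ℕ)}

theorem abs_eval_ofCoeffs_le_of_mem_ball (hS : 0 ∉ S) (c : S → ℝ) {ρ : ℝ} (hρ : ρ ≤ 1)
    {y : EuclideanSpace ℝ σ} (hy : y ∈ ball 0 ρ) :
    |eval y.ofLp (ofCoeffs S c)| ≤ ρ * (Fintype.card S * ‖c‖) := by
  rw [mem_ball_zero_iff] at hy
  refine (abs_eval_ofCoeffs_le hS ((norm_nonneg y).trans hy.le) hρ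
    (fun i => (PiLp.norm_apply_le y i).trans hy.le) c).trans ?_
  gcongr
  · linarith [norm_nonneg y]
  · simpa using Pi.sum_norm_apply_le_norm c

theorem osc_eval_ofCoeffs_ball_le (hS : 0 ∉ S) (c : S → ℝ) {ρ : ℝ} (hρ₀ : 0 ≤ ρ) (hρ₁ : ρ ≤ 1) :
    osc (fun y : EuclideanSpace ℝ σ => eval y.ofLp (ofCoeffs S c)) (ball 0 ρ) ≤
      2 * Fintype.card S * ρ * ‖c‖ := by
  have h := osc_le_two_mul (by positivity) fun y hy => abs_eval_ofCoeffs_le_of_mem_ball hS c hρ₁ hy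
  linarith

variable (σ S) in
noncomputable def coeffOsc (c : S → ℝ) : ℝ :=
  osc (fun y : EuclideanSpace ℝ σ => eval y.ofLp (ofCoeffs S c)) (ball 0 1)

theorem coeffOsc_le_add (hS : 0 ∉ S) (c c' : S → ℝ) :
    coeffOsc σ S c ≤ coeffOsc σ S c' + 2 * Fintype.card S * ‖c - c'‖ := by
  have hsplit : (fun y : EuclideanSpace ℝ σ => eval y.ofLp (ofCoeffs S c)) =
      (fun y => eval y.ofLp (ofCoeffs S c')) + fun y => eval y.ofLp (ofCoeffs S (c - c')) := by
    ext y
    simp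
  have hdiff := osc_eval_ofCoeffs_ball_le (σ := σ) hS (c - c') zero_le_one le_rfl
  calc coeffOsc σ S c ≤ coeffOsc σ S c' + osc (fun y : EuclideanSpace ℝ σ =>
        eval y.ofLp (ofCoeffs S (c - c'))) (ball 0 1) := by
        rw [coeffOsc, hsplit]
        exact osc_add_le (fun y hy => abs_eval_ofCoeffs_le_of_mem_ball hS c' le_rfl hy)
          (fun y hy => abs_eval_ofCoeffs_le_of_mem_ball hS (c - c') le_rfl hy)
    _ ≤ coeffOsc σ S c' + 2 * Fintype.card S * ‖c - c'‖ := by linarith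

theorem continuous_coeffOsc (hS : 0 ∉ S) : Continuous (coeffOsc σ S) :=
  (LipschitzWith.of_le_add_mul' _ fun c c' => by
    simpa [dist_eq_norm] using coeffOsc_le_add hS c c').continuous

theorem coeffOsc_smul {t : ℝ} (ht : 0 ≤ t) (c : S → ℝ) :
    coeffOsc σ S (t • c) = t * coeffOsc σ S c := by
  simp only [coeffOsc, map_smul, smul_eval]
  exact osc_const_mul ht _ _

theorem coeffOsc_pos (hS : 0 ∉ S) {c : S → ℝ} (hc : c ≠ 0) : 0 < coeffOsc σ S c := by
  refine (osc_nonneg _ _).lt_of_ne fun h => hc ?_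
  have hzero : eval 0 (ofCoeffs S c) = 0 := abs_nonpos_iff.mp <| by
    simpa using abs_eval_ofCoeffs_le hS le_rfl zero_le_one (y := 0) (by simp) c
  have hball : ∀ y ∈ ball (0 : EuclideanSpace ℝ σ) 1, eval y.ofLp (ofCoeffs S c) = 0 := by
    intro y hy
    have := abs_sub_le_osc (fun y hy => abs_eval_ofCoeffs_le_of_mem_ball hS c le_rfl hy) hy
      (mem_ball_self one_pos)
    rwa [← h, WithLp.ofLp_zero, hzero, sub_zero, abs_nonpos_iff] at this
  have hnhds : ∀ᶠ y in 𝓝 (0 : σ → ℝ), eval y (ofCoeffs S c) = 0 :=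
    (((PiLp.continuous_toLp 2 fun _ : σ => ℝ).tendsto 0).eventually_mem
      (ball_mem_nhds _ one_pos)).mono fun y hy => hball _ hy
  have hp := eq_zero_of_eventually_eval_eq_zero hnhds
  funext α
  rw [← coeff_ofCoeffs c α, hp, coeff_zero, Pi.zero_apply]

end CoeffOsc

theorem exists_osc_ball_le_of_support_subset {σ : Type*} [Fintype σ] {S : Finset (σ →₀ ℕ)}
    (hS : 0 ∉ S) :
    ∃ K, ∀ p : MvPolynomial σ ℝ, p.support ⊆ S → ∀ ρ, 0 ≤ ρ → ρ ≤ 1 →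
      osc (fun y : EuclideanSpace ℝ σ => eval y.ofLp p) (ball 0 ρ) ≤
        K * ρ * osc (fun y : EuclideanSpace ℝ σ => eval y.ofLp p) (ball 0 1) := by
  obtain ⟨m, hm, hlow⟩ := exists_pos_mul_norm_le (continuous_coeffOsc (σ := σ) hS)
    (fun t ht => coeffOsc_smul ht.le) (fun c => coeffOsc_pos hS)
  refine ⟨2 * Fintype.card S / m, fun p hp ρ hρ₀ hρ₁ => ?_⟩
  set c : S → ℝ := fun α => coeff α.1 p
  have hc : ‖c‖ ≤ coeffOsc σ S c / m := by
    rw [le_div_iff₀ hm, mul_comm]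
    exact hlow c
  rw [← ofCoeffs_coeff hp]
  calc _ ≤ 2 * Fintype.card S * ρ * ‖c‖ := osc_eval_ofCoeffs_ball_le hS c hρ₀ hρ₁
    _ ≤ 2 * Fintype.card S * ρ * (coeffOsc σ S c / m) := by gcongr
    _ = 2 * Fintype.card S / m * ρ * coeffOsc σ S c := by ring

theorem exists_osc_ball_le_of_totalDegree_le (σ : Type*) [Fintype σ] (d : ℕ) :
    ∃ K, ∀ p : MvPolynomial σ ℝ, p.totalDegree ≤ d → ∀ ρ, 0 ≤ ρ → ρ ≤ 1 →
      osc (fun y : EuclideanSpace ℝ σ => eval y.ofLp p) (ball 0 ρ) ≤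
        K * ρ * osc (fun y : EuclideanSpace ℝ σ => eval y.ofLp p) (ball 0 1) := by
  have hfin : {α : σ →₀ ℕ | α.degree ≤ d ∧ α ≠ 0}.Finite :=
    (Finsupp.finite_of_degree_le d).subset fun _ h => h.1
  obtain ⟨K, hK⟩ := exists_osc_ball_le_of_support_subset (σ := σ) (S := hfin.toFinset) (by simp)
  refine ⟨K, fun p hp ρ hρ₀ hρ₁ => ?_⟩
  have hsupp : (p - C (coeff 0 p)).support ⊆ hfin.toFinset := by
    simpa [← Finset.coe_subset] using support_sub_C_coeff_zero_subset hp
  simpa [osc_sub_const] using hK _ hsupp ρ hρ₀ hρ₁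

theorem osc_eval_ball_eq_bind₁ {σ : Type*} [Fintype σ] (Q : MvPolynomial σ ℝ)
    (x : EuclideanSpace ℝ σ) {R : ℝ} (hR : 0 < R) (ρ : ℝ) :
    osc (fun a : EuclideanSpace ℝ σ => eval a.ofLp Q) (ball x (R * ρ)) =
      osc (fun y : EuclideanSpace ℝ σ => eval y.ofLp (bind₁ (fun i => C (x i) + C R * X i) Q))
        (ball 0 ρ) := by
  have himage : (fun y => x + R • y) '' ball 0 ρ = ball x (R * ρ) := by
    rw [show (fun y => x + R • y) = (x +ᵥ ·) ∘ (R • ·) from rfl, Set.image_comp, Set.image_smul,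
      _root_.smul_ball hR.ne', Set.image_vadd, vadd_ball]
    simp [abs_of_pos hR]
  rw [← himage, ← osc_comp]
  congr 1
  funext y
  rw [Function.comp_apply, eval_bind₁]
  congr 2
  funext i
  simp

theorem polySeminorm_eq_osc (n : ℕ) (Q : MvPolynomial (Fin n) ℝ)
    (I : Set (EuclideanSpace ℝ (Fin n))) :
    polySeminorm n Q I = osc (fun a : EuclideanSpace ℝ (Fin n) => eval a.ofLp Q) I := rfl

theorem stmt_1_general (d n : ℕ) :
    ∃ C : ℝ, 0 < C ∧ ∀ (Q : MvPolynomial (Fin n) ℝ), Q.totalDegree ≤ d →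
      ∀ (x : EuclideanSpace ℝ (Fin n)) (r R : ℝ), 0 < r → r ≤ R →
        polySeminorm n Q (Metric.ball x r) ≤
          C * (r / R) * polySeminorm n Q (Metric.ball x R) := by
  obtain ⟨K, hK⟩ := exists_osc_ball_le_of_totalDegree_le (Fin n) d
  refine ⟨max K 1, by positivity, fun Q hQ x r R hr hrR => ?_⟩
  have hR : 0 < R := hr.trans_le hrR
  have hdeg := (totalDegree_bind₁_le (fun i => totalDegree_C_add_C_mul_X_le (x i) R i) Q).trans hQ
  have h := hK _ hdeg (r / R) (by positivity) (div_le_one_of_le₀ hrR hR.le)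
  rw [← osc_eval_ball_eq_bind₁ Q x hR, ← osc_eval_ball_eq_bind₁ Q x hR, mul_div_cancel₀ r hR.ne',
    mul_one, ← polySeminorm_eq_osc, ← polySeminorm_eq_osc] at h
  refine h.trans ?_
  gcongr
  · exact osc_nonneg _ _
  · exact le_max_left K 1

theorem stmt_1 (d n : ℕ) (hd : 1 ≤ d) (hn : 1 ≤ n) :
    ∃ C : ℝ, 0 < C ∧ ∀ (Q : MvPolynomial (Fin n) ℝ), Q.totalDegree ≤ d →
      ∀ (x : EuclideanSpace ℝ (Fin n)) (r R : ℝ), 0 < r → r ≤ R →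
        polySeminorm n Q (Metric.ball x r) ≤
          C * (r / R) * polySeminorm n Q (Metric.ball x R) :=
  stmt_1_general d n
end

section
/- Let $1 < p, q < \infty$, let $(X,\mu)$ be a $\sigma$-finite measure space, and let $g: X \to \mathbb{C}$ be measurable. Suppose there exists $A < \infty$ such that for every measurable $G \subset X$ with $0 < \mu(G) < \infty$ there exists a measurable $\tilde G \subset X$ with $\mu(\tilde G) \leq \mu(G)/2$ and $\|g \mathbf{1}_{G \setminus \tilde G}\|_{L^{q,\infty}(X)} \leq A\, \mu(G)^{1/q - 1/p}$. Then $\|g\|_{L^{p,\infty}(X)} \leq C_{p,q} A$ for a constant $C_{p,q}$ depending only on $p$ and $q$. -/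
/-!
No iteration is needed. Fix a level `λ` and a finite-measure set `F ⊆ {|g| > λ}`; applying
the hypothesis to `G = F` once gives `μ(F \ F̃) ≥ μ(F)/2` and `|g 1_{F \ F̃}| > λ` on `F \ F̃`, so
`λ (μ(F)/2)^{1/q} ≤ A μ(F)^{1/q - 1/p}`, i.e. `λ μ(F)^{1/p} ≤ 2^{1/q} A`.
Exhausting `{|g| > λ}` by such sets (σ-finiteness) gives `‖g‖_{L^{p,∞}} ≤ 2^{1/q} A`.
-/

open MeasureTheory
open scoped ENNReal NNReal

/-- The weak `L^q` quasinorm `‖g‖_{L^{q,∞}} = sup_{λ>0} λ μ({|g|>λ})^{1/q}`. -/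
noncomputable def weakLpNorm {X : Type*} [MeasurableSpace X] (μ : Measure X)
    (g : X → ℂ) (q : ℝ) : ℝ≥0∞ :=
  ⨆ l : NNReal, (l : ℝ≥0∞) * μ {x | (l : ℝ) < ‖g x‖} ^ (1 / q)

open Set Filter

theorem ENNReal.mul_rpow_le_of_mul_rpow_le_mul_rpow_sub {x y a : ℝ≥0∞} {s t : ℝ}
    (ha₀ : a ≠ 0) (ha : a ≠ ∞) (h : x * a ^ s ≤ y * a ^ (s - t)) : x * a ^ t ≤ y :=
  calc x * a ^ t = x * a ^ s * a ^ (t - s) := by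
        rw [mul_assoc, ← ENNReal.rpow_add _ _ ha₀ ha, add_sub_cancel]
    _ ≤ y * a ^ (s - t) * a ^ (t - s) := by gcongr
    _ = y := by
        rw [mul_assoc, ← ENNReal.rpow_add _ _ ha₀ ha, sub_add_sub_cancel, sub_self,
          ENNReal.rpow_zero, mul_one]

section Measure

variable {α : Type*} [MeasurableSpace α] {μ : Measure α}

theorem half_measure_le_measure_sdiff {s t : Set α} (hs : μ s ≠ ∞) (ht : μ t ≤ μ s / 2) :
    μ s / 2 ≤ μ (s \ t) :=
  calc μ s / 2 = μ s - μ s / 2 := (ENNReal.sub_half hs).symm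
    _ ≤ μ s - μ t := by gcongr
    _ ≤ μ (s \ t) := le_measure_sdiff

theorem apply_measure_le_of_forall_subset_measure_lt_top [SigmaFinite μ] {β : Type*}
    [TopologicalSpace β] [Preorder β] [ClosedIicTopology β] {f : ℝ≥0∞ → β} {c : β}
    {s : Set α} (hf : Continuous f) (hs : MeasurableSet s)
    (h : ∀ t ⊆ s, MeasurableSet t → μ t < ∞ → f (μ t) ≤ c) : f (μ s) ≤ c := by
  have hexhaust : Tendsto (fun n ↦ μ (s ∩ spanningSets μ n)) atTop (nhds (μ s)) := by
    simpa only [Function.comp_def, ← inter_iUnion, iUnion_spanningSets, inter_univ] using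
      tendsto_measure_iUnion_atTop (μ := μ) fun m n hmn ↦
        inter_subset_inter_right s (monotone_spanningSets μ hmn)
  refine le_of_tendsto' ((hf.tendsto _).comp hexhaust) fun n ↦ h _ inter_subset_left
    (hs.inter (measurableSet_spanningSets μ n)) ?_
  exact (measure_mono inter_subset_right).trans_lt (measure_spanningSets_lt_top μ n)

end Measure

section WeakLp

variable {X : Type*} [MeasurableSpace X] {μ : Measure X} {g : X → ℂ} {p q : ℝ}

theorem mul_measure_rpow_le_weakLpNorm (hq : 0 ≤ q) {l : ℝ≥0} {s : Set X}
    (hs : s ⊆ {x | (l : ℝ) < ‖g x‖}) :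
    (l : ℝ≥0∞) * μ s ^ (1 / q) ≤ weakLpNorm μ g q :=
  calc (l : ℝ≥0∞) * μ s ^ (1 / q)
      ≤ l * μ {x | (l : ℝ) < ‖g x‖} ^ (1 / q) := by gcongr
    _ ≤ weakLpNorm μ g q :=
        le_iSup (fun l : ℝ≥0 ↦ (l : ℝ≥0∞) * μ {x | (l : ℝ) < ‖g x‖} ^ (1 / q)) l

theorem mul_measure_rpow_le_of_weakLpNorm_indicator_sdiff_le (hq : 0 ≤ q) {l : ℝ≥0}
    {A : ℝ≥0∞} {F Ft : Set X} (hF : F ⊆ {x | (l : ℝ) < ‖g x‖}) (hF₀ : μ F ≠ 0)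
    (hF_fin : μ F ≠ ∞) (hFt : μ Ft ≤ μ F / 2)
    (hA : weakLpNorm μ ((F \ Ft).indicator g) q ≤ A * μ F ^ (1 / q - 1 / p)) :
    (l : ℝ≥0∞) * μ F ^ (1 / p) ≤ 2 ^ (1 / q) * A := by
  have hq' : 0 ≤ 1 / q := one_div_nonneg.2 hq
  have hlevel : F \ Ft ⊆ {x | (l : ℝ) < ‖(F \ Ft).indicator g x‖} := fun x hx ↦ by
    simpa [indicator_of_mem hx] using hF hx.1
  have hhalf : (l : ℝ≥0∞) * (μ F / 2) ^ (1 / q) ≤ A * μ F ^ (1 / q - 1 / p) :=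
    calc (l : ℝ≥0∞) * (μ F / 2) ^ (1 / q) ≤ l * μ (F \ Ft) ^ (1 / q) := by
          gcongr; exact half_measure_le_measure_sdiff hF_fin hFt
      _ ≤ weakLpNorm μ ((F \ Ft).indicator g) q := mul_measure_rpow_le_weakLpNorm hq hlevel
      _ ≤ A * μ F ^ (1 / q - 1 / p) := hA
  refine ENNReal.mul_rpow_le_of_mul_rpow_le_mul_rpow_sub hF₀ hF_fin (s := 1 / q) ?_
  calc (l : ℝ≥0∞) * μ F ^ (1 / q) = 2 ^ (1 / q) * (l * (μ F / 2) ^ (1 / q)) := by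
        rw [ENNReal.div_rpow_of_nonneg _ _ hq', mul_left_comm,
          ENNReal.mul_div_cancel (by positivity) (by simp)]
    _ ≤ 2 ^ (1 / q) * (A * μ F ^ (1 / q - 1 / p)) := by gcongr
    _ = 2 ^ (1 / q) * A * μ F ^ (1 / q - 1 / p) := (mul_assoc _ _ _).symm

theorem weakLpNorm_le_of_forall_halving [SigmaFinite μ] (hg : Measurable g) (hp : 0 < p)
    (hq : 0 ≤ q) {A : ℝ≥0∞}
    (h : ∀ G : Set X, MeasurableSet G → 0 < μ G → μ G < ∞ →
      ∃ Gt : Set X, μ Gt ≤ μ G / 2 ∧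
        weakLpNorm μ ((G \ Gt).indicator g) q ≤ A * μ G ^ (1 / q - 1 / p)) :
    weakLpNorm μ g p ≤ 2 ^ (1 / q) * A := by
  refine iSup_le fun l ↦ ?_
  refine apply_measure_le_of_forall_subset_measure_lt_top
    (f := fun a ↦ (l : ℝ≥0∞) * a ^ (1 / p))
    ((ENNReal.continuous_const_mul ENNReal.coe_ne_top).comp ENNReal.continuous_rpow_const)
    (measurableSet_lt measurable_const hg.norm) fun F hF hF_meas hF_fin ↦ ?_
  rcases eq_or_ne (μ F) 0 with hF₀ | hF₀
  · simp [hF₀, hp]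
  obtain ⟨Ft, hFt, hA⟩ := h F hF_meas (pos_iff_ne_zero.2 hF₀) hF_fin
  exact mul_measure_rpow_le_of_weakLpNorm_indicator_sdiff_le hq hF hF₀ hF_fin.ne hFt hA

end WeakLp

/-- Bateman's extrapolation lemma. -/
theorem stmt_4 (p q : ℝ) (hp : 1 < p) (hq : 1 < q) :
    ∃ C : ℝ, 0 < C ∧
      ∀ (X : Type) (_ : MeasurableSpace X) (μ : Measure X), SigmaFinite μ →
        ∀ (g : X → ℂ), Measurable g →
          ∀ (A : ℝ), 0 ≤ A →
            (∀ G : Set X, MeasurableSet G → 0 < μ G → μ G < ⊤ →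
              ∃ Gt : Set X, MeasurableSet Gt ∧ μ Gt ≤ μ G / 2 ∧
                weakLpNorm μ (Set.indicator (G \ Gt) g) q ≤
                  ENNReal.ofReal A * μ G ^ (1 / q - 1 / p)) →
            weakLpNorm μ g p ≤ ENNReal.ofReal (C * A) := by
  refine ⟨2 ^ (1 / q), by positivity, ?_⟩
  intro X _ μ _ g hg A _ h
  rw [ENNReal.ofReal_mul (by positivity), ← ENNReal.ofReal_rpow_of_pos two_pos,
    ENNReal.ofReal_ofNat]
  exact weakLpNorm_le_of_forall_halving hg (by linarith) (by linarith) fun G hG hG₀ hG_fin ↦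
    (h G hG hG₀ hG_fin).imp fun _ ⟨_, hGt, hA⟩ ↦ ⟨hGt, hA⟩
end

section
/- Let $0 \leq \alpha < 1/2$ and $0 < \nu \leq 1$. Let $G \subset \mathbb{R}^n$ be measurable and $\tilde G := \{x : M\mathbf{1}_G(x) > \nu\}$. Then for all $f \in L^2(\mathbb{R}^n)$, $\| \mathbf{1}_G \cdot M(\mathbf{1}_{\mathbb{R}^n \setminus \tilde G} f) \|_{L^2} \leq C_{\alpha,n}\, \nu^\alpha \|f\|_{L^2}$. -/
open MeasureTheory
open scoped ENNReal

/-- The cube with center `c` and half side length `r`. -/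
def centeredCube (n : ℕ) (c : Fin n → ℝ) (r : ℝ) : Set (Fin n → ℝ) :=
  {y | ∀ i, |y i - c i| ≤ r}

/-- The Hardy–Littlewood maximal operator over cubes,
`Mf(x) = sup_{x ∈ I} |I|⁻¹ ∫_I |f|`. -/
noncomputable def maxOp (n : ℕ) (f : (Fin n → ℝ) → ℝ) (x : Fin n → ℝ) : ℝ≥0∞ :=
  ⨆ (c : Fin n → ℝ) (r : ℝ) (_ : 0 < r) (_ : x ∈ centeredCube n c r),
    (∫⁻ y in centeredCube n c r, ENNReal.ofReal |f y|) / volume (centeredCube n c r)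

/-!
Write `g = 𝟙_{G̃ᶜ} f`; at every point where `g ≠ 0` the average of `𝟙_G` over any cube is at
most `ν`. In the Vitali covering argument for the weak `(1,1)` bound of `M g` on `G`, each
selected cube `Q` meets the support of `g`, so `|G ∩ 4Q| ≤ ν |4Q| = 4ⁿ ν |Q|`: this is the
Fefferman–Stein inequality for the weight `𝟙_G`, and it gives
`|G ∩ {M g > λ}| ≤ 4ⁿ ν λ⁻¹ ‖g‖₁`. Splitting `g` at height `t / 2` and integrating the weak
bound for the large part against `2t dt` (layer cake, Fubini) yields
`∫_G (M g)² ≤ 8 · 4ⁿ ν ‖g‖₂²`; since `ν ≤ 1` and `α < 1/2`, `ν^{1/2} ≤ ν^α`.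
-/

open Metric Set Filter Topology

theorem lintegral_Ioo_ofReal_two_mul {m : ℝ} (hm : 0 ≤ m) :
    ∫⁻ t in Ioo 0 m, ENNReal.ofReal (2 * t) = ENNReal.ofReal (m ^ 2) := by
  have hint : IntegrableOn (fun t : ℝ => 2 * t) (Ioo 0 m) :=
    (continuous_const.mul continuous_id).integrableOn_Icc.mono_set Ioo_subset_Icc_self
  rw [← ofReal_integral_eq_lintegral_ofReal hint
    ((ae_restrict_iff' measurableSet_Ioo).2 (Eventually.of_forall fun t ht => by
      show (0 : ℝ) ≤ 2 * t; linarith [ht.1])), ← integral_Ioc_eq_integral_Ioo,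
    ← intervalIntegral.integral_of_le hm, intervalIntegral.integral_const_mul, integral_id]
  ring_nf

theorem lintegral_Ioi_indicator_ofReal_lt (a : ℝ≥0∞) :
    ∫⁻ t in Ioi 0, {t : ℝ | ENNReal.ofReal t < a}.indicator (fun t => ENNReal.ofReal (2 * t)) t
      = a ^ 2 := by
  rw [lintegral_indicator (measurableSet_lt (by fun_prop) measurable_const),
    Measure.restrict_restrict (measurableSet_lt (by fun_prop) measurable_const)]
  rcases eq_or_ne a ⊤ with rfl | ha
  · rw [ENNReal.top_pow two_ne_zero]
    refine ENNReal.eq_top_of_forall_nnreal_le fun r => ?_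
    calc (r : ℝ≥0∞) ≤ ENNReal.ofReal ((r + 1) ^ 2) := by
          rw [← ENNReal.ofReal_coe_nnreal]
          exact ENNReal.ofReal_le_ofReal (by nlinarith [r.2])
      _ = ∫⁻ t in Ioo 0 (r + 1 : ℝ), ENNReal.ofReal (2 * t) :=
          (lintegral_Ioo_ofReal_two_mul (by positivity)).symm
      _ ≤ _ := lintegral_mono_set fun t ht =>
          show t ∈ {t : ℝ | _} ∩ _ from ⟨ENNReal.ofReal_lt_top, ht.1⟩
  · have hset : {t : ℝ | ENNReal.ofReal t < a} ∩ Ioi 0 = Ioo 0 a.toReal := by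
      ext t
      simp only [mem_inter_iff, mem_ofPred_eq, mem_Ioi, mem_Ioo]
      exact ⟨fun h => ⟨h.2, (ENNReal.ofReal_lt_iff_lt_toReal h.2.le ha).1 h.1⟩,
        fun h => ⟨(ENNReal.ofReal_lt_iff_lt_toReal h.1.le ha).2 h.2, h.1⟩⟩
    rw [hset, lintegral_Ioo_ofReal_two_mul ENNReal.toReal_nonneg,
      ENNReal.ofReal_pow ENNReal.toReal_nonneg, ENNReal.ofReal_toReal ha]

theorem lintegral_Ioi_indicator_half_lt (m : ℝ) :
    ∫⁻ t in Ioi 0, {t : ℝ | t / 2 < m}.indicator (fun _ => ENNReal.ofReal m) t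
      = 2 * ENNReal.ofReal m ^ 2 := by
  rw [lintegral_indicator_const (measurableSet_lt (by fun_prop) measurable_const),
    Measure.restrict_apply (measurableSet_lt (by fun_prop) measurable_const),
    show {t : ℝ | t / 2 < m} ∩ Ioi 0 = Ioo 0 (2 * m) by
      ext t; simp only [mem_inter_iff, mem_ofPred_eq, mem_Ioi, mem_Ioo]; constructor <;>
        intro h <;> constructor <;> linarith [h.1, h.2],
    Real.volume_Ioo, sub_zero, ENNReal.ofReal_mul zero_le_two]
  simp only [ENNReal.ofReal_ofNat]
  ring

section LayerCake

variable {α β : Type*} [MeasurableSpace α] [MeasurableSpace β]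

-- Mathlib's layer-cake formulas are for real-valued functions; here `h` may take the value `∞`.
theorem lintegral_sq_eq_lintegral_meas_lt {μ : Measure α} [SFinite μ] {h : α → ℝ≥0∞}
    (hh : Measurable h) :
    ∫⁻ x, h x ^ 2 ∂μ
      = ∫⁻ t in Ioi (0 : ℝ), ENNReal.ofReal (2 * t) * μ {x | ENNReal.ofReal t < h x} := by
  have hF : Measurable (Function.uncurry fun (x : α) (t : ℝ) =>
      {x | ENNReal.ofReal t < h x}.indicator (fun _ => ENNReal.ofReal (2 * t)) x) :=
    Measurable.ite (measurableSet_lt (by fun_prop) (hh.comp measurable_fst))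
      (f := fun p : α × ℝ => ENNReal.ofReal (2 * p.2)) (by fun_prop) measurable_const
  calc ∫⁻ x, h x ^ 2 ∂μ
      = ∫⁻ x, (∫⁻ t in Ioi (0 : ℝ),
          {x | ENNReal.ofReal t < h x}.indicator (fun _ => ENNReal.ofReal (2 * t)) x) ∂μ := by
        refine lintegral_congr fun x => ?_
        rw [← lintegral_Ioi_indicator_ofReal_lt]
        rfl
    _ = _ := by
        rw [lintegral_lintegral_swap hF.aemeasurable]
        refine lintegral_congr fun t => ?_
        rw [lintegral_indicator_const (measurableSet_lt measurable_const hh)]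

theorem setLIntegral_lt_abs_ne_top {μ : Measure α} {g : α → ℝ} (hg : Measurable g) {s : ℝ}
    (hs : 0 < s) (h2 : ∫⁻ y, ENNReal.ofReal |g y| ^ 2 ∂μ ≠ ⊤) :
    ∫⁻ y in {y | s < |g y|}, ENNReal.ofReal |g y| ∂μ ≠ ⊤ := by
  refine ne_top_of_le_ne_top (ENNReal.mul_ne_top (ENNReal.ofReal_ne_top (r := s⁻¹)) h2) ?_
  calc ∫⁻ y in {y | s < |g y|}, ENNReal.ofReal |g y| ∂μ
      ≤ ∫⁻ y in {y | s < |g y|}, ENNReal.ofReal s⁻¹ * ENNReal.ofReal |g y| ^ 2 ∂μ := by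
        refine setLIntegral_mono' (measurableSet_lt measurable_const hg.abs) fun y hy => ?_
        rw [← ENNReal.ofReal_pow (abs_nonneg _), ← ENNReal.ofReal_mul (by positivity)]
        refine ENNReal.ofReal_le_ofReal ?_
        have : 1 ≤ s⁻¹ * |g y| := by rw [inv_mul_eq_div, one_le_div hs]; exact le_of_lt hy
        nlinarith [abs_nonneg (g y)]
    _ ≤ ENNReal.ofReal s⁻¹ * ∫⁻ y, ENNReal.ofReal |g y| ^ 2 ∂μ := by
        rw [lintegral_const_mul' _ _ ENNReal.ofReal_ne_top]
        exact mul_le_mul_right (setLIntegral_le_lintegral _ _) _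

theorem lintegral_sq_le_of_meas_lt_le {μ : Measure α} [SFinite μ] {μ' : Measure β} [SFinite μ']
    {h : α → ℝ≥0∞} (hh : Measurable h) {u : β → ℝ} (hu : Measurable u) (K : ℝ≥0∞)
    (hweak : ∀ t : ℝ, 0 < t → μ {x | ENNReal.ofReal t < h x}
      ≤ K * (∫⁻ y in {y | t / 2 < |u y|}, ENNReal.ofReal |u y| ∂μ') / ENNReal.ofReal (t / 2)) :
    ∫⁻ x, h x ^ 2 ∂μ ≤ 8 * K * ∫⁻ y, ENNReal.ofReal |u y| ^ 2 ∂μ' := by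
  set F : ℝ → β → ℝ≥0∞ := fun t y =>
    {y | t / 2 < |u y|}.indicator (fun y => ENNReal.ofReal |u y|) y
  have hF : Measurable (Function.uncurry F) :=
    Measurable.ite (measurableSet_lt (by fun_prop) (hu.comp measurable_snd).abs)
      (f := fun p : ℝ × β => ENNReal.ofReal |u p.2|) (by fun_prop) measurable_const
  have hJ : ∀ t, ∫⁻ y, F t y ∂μ' = ∫⁻ y in {y | t / 2 < |u y|}, ENNReal.ofReal |u y| ∂μ' :=
    fun t => lintegral_indicator (measurableSet_lt measurable_const hu.abs) _
  calc ∫⁻ x, h x ^ 2 ∂μ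
      = ∫⁻ t in Ioi (0 : ℝ), ENNReal.ofReal (2 * t) * μ {x | ENNReal.ofReal t < h x} :=
        lintegral_sq_eq_lintegral_meas_lt hh
    _ ≤ ∫⁻ t in Ioi (0 : ℝ), 4 * K * ∫⁻ y, F t y ∂μ' := by
        refine setLIntegral_mono' measurableSet_Ioi fun t (ht : 0 < t) => ?_
        have h4 : ENNReal.ofReal (2 * t) = 4 * ENNReal.ofReal (t / 2) := by
          rw [← ENNReal.ofReal_ofNat 4, ← ENNReal.ofReal_mul (by norm_num)]
          ring_nf
        calc ENNReal.ofReal (2 * t) * μ {x | ENNReal.ofReal t < h x}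
            ≤ 4 * (ENNReal.ofReal (t / 2) * (K * (∫⁻ y, F t y ∂μ') / ENNReal.ofReal (t / 2))) := by
              rw [h4, mul_assoc, hJ]
              gcongr
              exact hweak t ht
          _ ≤ 4 * K * ∫⁻ y, F t y ∂μ' := by
              rw [mul_assoc (4 : ℝ≥0∞)]
              exact mul_le_mul_right ENNReal.mul_div_le _
    _ = 4 * K * ∫⁻ y, (∫⁻ t in Ioi (0 : ℝ), F t y) ∂μ' := by
        have hJm : Measurable fun t => ∫⁻ y, F t y ∂μ' := hF.lintegral_prod_right'
        rw [lintegral_const_mul _ hJm, lintegral_lintegral_swap hF.aemeasurable]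
    _ = 4 * K * ∫⁻ y, 2 * ENNReal.ofReal |u y| ^ 2 ∂μ' := by
        congr 1
        exact lintegral_congr fun y => lintegral_Ioi_indicator_half_lt |u y|
    _ = 8 * K * ∫⁻ y, ENNReal.ofReal |u y| ^ 2 ∂μ' := by
        rw [lintegral_const_mul' 2 _ ENNReal.ofNat_ne_top]
        ring

end LayerCake

section MaximalOperator

variable {n : ℕ}

-- `Fin n → ℝ` carries the sup metric.
theorem centeredCube_eq_closedBall (c : Fin n → ℝ) {r : ℝ} (hr : 0 ≤ r) :
    centeredCube n c r = closedBall c r := by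
  ext y
  simp only [centeredCube, mem_ofPred_eq, mem_closedBall, dist_pi_le_iff hr, Real.dist_eq]

theorem maxOp_eq_iSup_closedBall (f : (Fin n → ℝ) → ℝ) (x : Fin n → ℝ) :
    maxOp n f x = ⨆ (c : Fin n → ℝ) (r : ℝ) (_ : 0 < r) (_ : x ∈ closedBall c r),
      (∫⁻ y in closedBall c r, ENNReal.ofReal |f y|) / volume (closedBall c r) := by
  unfold maxOp
  refine iSup_congr fun c => iSup_congr fun r => iSup_congr fun hr => ?_
  rw [centeredCube_eq_closedBall c hr.le]

theorem le_maxOp {f : (Fin n → ℝ) → ℝ} {x c : Fin n → ℝ} {r : ℝ} (hr : 0 < r)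
    (hx : x ∈ closedBall c r) :
    (∫⁻ y in closedBall c r, ENNReal.ofReal |f y|) / volume (closedBall c r) ≤ maxOp n f x := by
  rw [maxOp_eq_iSup_closedBall]
  exact le_iSup_of_le c (le_iSup_of_le r (le_iSup_of_le hr (le_iSup_of_le hx le_rfl)))

theorem maxOp_le_iff {f : (Fin n → ℝ) → ℝ} {x : Fin n → ℝ} {l : ℝ≥0∞} :
    maxOp n f x ≤ l ↔ ∀ c r, 0 < r → x ∈ closedBall c r →
      (∫⁻ y in closedBall c r, ENNReal.ofReal |f y|) / volume (closedBall c r) ≤ l := by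
  simp only [maxOp_eq_iSup_closedBall, iSup_le_iff]

theorem lt_maxOp_iff {f : (Fin n → ℝ) → ℝ} {x : Fin n → ℝ} {l : ℝ≥0∞} :
    l < maxOp n f x ↔ ∃ c r, 0 < r ∧ x ∈ closedBall c r ∧
      l < (∫⁻ y in closedBall c r, ENNReal.ofReal |f y|) / volume (closedBall c r) := by
  simpa using (maxOp_le_iff (f := f) (x := x) (l := l)).not

theorem volume_closedBall_pi (c : Fin n → ℝ) {r : ℝ} (hr : 0 ≤ r) :
    volume (closedBall c r) = ENNReal.ofReal ((2 * r) ^ n) := by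
  rw [Real.volume_pi_closedBall c hr, Fintype.card_fin]

theorem lowerSemicontinuous_maxOp (f : (Fin n → ℝ) → ℝ) : LowerSemicontinuous (maxOp n f) := by
  intro x l hl
  obtain ⟨c, r, hr, hx, hlt⟩ := lt_maxOp_iff.1 hl
  -- a slightly larger concentric ball still has average above `l` and is a neighbourhood of `x`
  set A := ∫⁻ y in closedBall c r, ENNReal.ofReal |f y|
  have hA : Tendsto (fun s : ℝ => A / ENNReal.ofReal ((2 * s) ^ n)) (𝓝[>] r)
      (𝓝 (A / volume (closedBall c r))) := by
    rw [volume_closedBall_pi c hr.le]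
    refine ENNReal.Tendsto.div tendsto_const_nhds
      (Or.inr (by simp; positivity)) ?_ (Or.inl ENNReal.ofReal_ne_top)
    exact (ENNReal.continuous_ofReal.comp (by fun_prop)).continuousWithinAt.tendsto
  obtain ⟨s, hls, hrs⟩ := ((hA.eventually (lt_mem_nhds hlt)).and self_mem_nhdsWithin).exists
  rw [Metric.eventually_nhds_iff]
  refine ⟨s - r, sub_pos.2 hrs, fun y hy => ?_⟩
  have hys : y ∈ closedBall c s := by
    rw [mem_closedBall]
    linarith [dist_triangle y x c, mem_closedBall.1 hx]
  refine hls.trans_le (le_trans ?_ (le_maxOp (hr.trans hrs) hys))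
  rw [volume_closedBall_pi c (hr.trans hrs).le]
  exact ENNReal.div_le_div_right
    (lintegral_mono_set (closedBall_subset_closedBall hrs.le)) _

theorem measurable_maxOp (f : (Fin n → ℝ) → ℝ) : Measurable (maxOp n f) :=
  (lowerSemicontinuous_maxOp f).measurable

theorem maxOp_le_of_abs_le {f : (Fin n → ℝ) → ℝ} {s : ℝ} (hf : ∀ y, |f y| ≤ s)
    (x : Fin n → ℝ) : maxOp n f x ≤ ENNReal.ofReal s := by
  refine maxOp_le_iff.2 fun c r _ _ => ENNReal.div_le_of_le_mul ?_
  calc (∫⁻ y in closedBall c r, ENNReal.ofReal |f y|)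
      ≤ ∫⁻ _ in closedBall c r, ENNReal.ofReal s :=
        lintegral_mono fun y => ENNReal.ofReal_le_ofReal (hf y)
    _ = ENNReal.ofReal s * volume (closedBall c r) := setLIntegral_const _ _

theorem maxOp_add_le {f : (Fin n → ℝ) → ℝ} (hf : Measurable f) (g : (Fin n → ℝ) → ℝ)
    (x : Fin n → ℝ) : maxOp n (f + g) x ≤ maxOp n f x + maxOp n g x := by
  refine maxOp_le_iff.2 fun c r hr hx => ?_
  calc (∫⁻ y in closedBall c r, ENNReal.ofReal |(f + g) y|) / volume (closedBall c r)
      ≤ ((∫⁻ y in closedBall c r, ENNReal.ofReal |f y|)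
          + ∫⁻ y in closedBall c r, ENNReal.ofReal |g y|) / volume (closedBall c r) := by
        rw [← lintegral_add_left (by fun_prop)]
        refine ENNReal.div_le_div_right (lintegral_mono fun y => ?_) _
        rw [← ENNReal.ofReal_add (abs_nonneg _) (abs_nonneg _)]
        exact ENNReal.ofReal_le_ofReal (abs_add_le _ _)
    _ ≤ maxOp n f x + maxOp n g x := by
        rw [ENNReal.add_div]
        exact add_le_add (le_maxOp hr hx) (le_maxOp hr hx)

theorem maxOp_zero_dim (f : (Fin 0 → ℝ) → ℝ) (x : Fin 0 → ℝ) :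
    maxOp 0 f x = ENNReal.ofReal |f x| := by
  have hvol : (volume : Measure (Fin 0 → ℝ)) = Measure.dirac x := by
    rw [volume_pi, Measure.pi_of_empty _ x]
  have havg : ∀ c : Fin 0 → ℝ, ∀ r, 0 < r →
      (∫⁻ y in closedBall c r, ENNReal.ofReal |f y|) / volume (closedBall c r)
        = ENNReal.ofReal |f x| := fun c r hr => by
    rw [← centeredCube_eq_closedBall c hr.le, show centeredCube 0 c r = univ from
      eq_univ_of_forall fun _ i => i.elim0, Measure.restrict_univ, hvol, lintegral_dirac,
      measure_univ, div_one]
  refine le_antisymm (maxOp_le_iff.2 fun c r hr _ => (havg c r hr).le) ?_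
  rw [← havg x 1 one_pos]
  exact le_maxOp one_pos (mem_closedBall_self zero_le_one)

theorem maxOp_le_add_maxOp_indicator {g : (Fin n → ℝ) → ℝ} (hg : Measurable g) {s : ℝ}
    (hs : 0 ≤ s) (x : Fin n → ℝ) :
    maxOp n g x ≤ ENNReal.ofReal s + maxOp n ({y | s < |g y|}.indicator g) x := by
  set S := {y | s < |g y|}
  calc maxOp n g x = maxOp n (Sᶜ.indicator g + S.indicator g) x := by
        rw [indicator_compl_add_self]
    _ ≤ maxOp n (Sᶜ.indicator g) x + maxOp n (S.indicator g) x :=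
        maxOp_add_le (hg.indicator (measurableSet_lt measurable_const hg.abs).compl) _ x
    _ ≤ ENNReal.ofReal s + maxOp n (S.indicator g) x := by
        refine add_le_add_left (maxOp_le_of_abs_le (fun y => ?_) x) _
        by_cases hy : y ∈ S
        · simpa [hy] using hs
        · rw [indicator_of_mem (show y ∈ Sᶜ from hy)]
          simpa [S] using hy

theorem exists_closedBall_mul_volume_lt_of_lt_maxOp {g : (Fin n → ℝ) → ℝ} {x : Fin n → ℝ}
    {t : ℝ≥0∞} (hx : t < maxOp n g x) :
    ∃ c r, 0 < r ∧ x ∈ closedBall c r ∧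
      t * volume (closedBall c r) < ∫⁻ y in closedBall c r, ENNReal.ofReal |g y| := by
  obtain ⟨c, r, hr, hxB, hlt⟩ := lt_maxOp_iff.1 hx
  exact ⟨c, r, hr, hxB, (ENNReal.lt_div_iff_mul_lt (Or.inl (measure_closedBall_pos _ c hr).ne')
    (Or.inl measure_closedBall_lt_top.ne)).1 hlt⟩

theorem le_max_one_toReal_of_volume_closedBall_le (hn : n ≠ 0) {c : Fin n → ℝ} {r : ℝ}
    (hr : 0 ≤ r) {V : ℝ≥0∞} (hV : V ≠ ⊤) (h : volume (closedBall c r) ≤ V) :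
    r ≤ max 1 V.toReal := by
  rw [volume_closedBall_pi c hr, ENNReal.ofReal_le_iff_le_toReal hV] at h
  rcases le_or_gt r 1 with hr1 | hr1
  · exact le_max_of_le_left hr1
  · refine le_max_of_le_right (le_trans ?_ h)
    calc r ≤ r ^ n := le_self_pow₀ hr1.le hn
      _ ≤ (2 * r) ^ n := by gcongr; linarith

theorem volume_inter_closedBall_le_of_maxOp_indicator_le {G : Set (Fin n → ℝ)}
    (hG : MeasurableSet G) {c z : Fin n → ℝ} {r : ℝ} (hr : 0 < r) (hz : z ∈ closedBall c r)
    {ν : ℝ≥0∞} (hν : maxOp n (G.indicator fun _ => (1 : ℝ)) z ≤ ν) :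
    volume (G ∩ closedBall c r) ≤ ν * volume (closedBall c r) := by
  have hind : ∀ y, ENNReal.ofReal |G.indicator (fun _ => (1 : ℝ)) y| = G.indicator 1 y := by
    intro y
    by_cases hy : y ∈ G <;> simp [hy]
  have havg := (le_maxOp hr hz).trans hν
  simp_rw [hind, lintegral_indicator_one hG, Measure.restrict_apply hG] at havg
  exact (ENNReal.div_le_iff_le_mul (Or.inl (measure_closedBall_pos _ c hr).ne')
    (Or.inl measure_closedBall_lt_top.ne)).1 havg

theorem volume_inter_closedBall_four_mul_le {G : Set (Fin n → ℝ)} (hG : MeasurableSet G)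
    {ν : ℝ≥0∞} {g : (Fin n → ℝ) → ℝ}
    (hg : ∀ x, g x ≠ 0 → maxOp n (G.indicator fun _ => (1 : ℝ)) x ≤ ν)
    {t : ℝ≥0∞} (ht0 : t ≠ 0) (ht : t ≠ ⊤) {c : Fin n → ℝ} {r : ℝ} (hr : 0 < r)
    (hlt : t * volume (closedBall c r) < ∫⁻ y in closedBall c r, ENNReal.ofReal |g y|) :
    volume (G ∩ closedBall c (4 * r))
      ≤ 4 ^ n * ν * (∫⁻ y in closedBall c r, ENNReal.ofReal |g y|) / t := by
  obtain ⟨z, hz, hgz⟩ : ∃ z ∈ closedBall c r, g z ≠ 0 := by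
    by_contra! h
    rw [setLIntegral_congr_fun (g := fun _ => 0) measurableSet_closedBall
        fun y hy => by simp [h y hy],
      lintegral_zero] at hlt
    exact not_lt_zero hlt
  have hvol : volume (closedBall c (4 * r)) = 4 ^ n * volume (closedBall c r) := by
    rw [volume_closedBall_pi c (by positivity), volume_closedBall_pi c hr.le,
      mul_left_comm, mul_pow, ENNReal.ofReal_mul (by positivity),
      ENNReal.ofReal_pow (by norm_num), ENNReal.ofReal_ofNat]
  have hB : volume (closedBall c r) ≤ (∫⁻ y in closedBall c r, ENNReal.ofReal |g y|) / t := by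
    rw [ENNReal.le_div_iff_mul_le (Or.inl ht0) (Or.inl ht), mul_comm]
    exact hlt.le
  calc volume (G ∩ closedBall c (4 * r))
      ≤ ν * volume (closedBall c (4 * r)) :=
        volume_inter_closedBall_le_of_maxOp_indicator_le hG (by positivity)
          (closedBall_subset_closedBall (by linarith) hz) (hg z hgz)
    _ ≤ 4 ^ n * ν * ((∫⁻ y in closedBall c r, ENNReal.ofReal |g y|) / t) := by
        rw [hvol, mul_left_comm, ← mul_assoc]
        gcongr
    _ = _ := (mul_div_assoc _ _ _).symm

theorem restrict_lt_maxOp_le (hn : n ≠ 0) {G : Set (Fin n → ℝ)} (hG : MeasurableSet G)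
    {ν : ℝ≥0∞} {g : (Fin n → ℝ) → ℝ}
    (hg : ∀ x, g x ≠ 0 → maxOp n (G.indicator fun _ => (1 : ℝ)) x ≤ ν)
    {t : ℝ≥0∞} (ht0 : t ≠ 0) (ht : t ≠ ⊤) (hint : ∫⁻ x, ENNReal.ofReal |g x| ≠ ⊤) :
    volume.restrict G {x | t < maxOp n g x}
      ≤ 4 ^ n * ν * (∫⁻ x, ENNReal.ofReal |g x|) / t := by
  rw [Measure.restrict_apply (measurableSet_lt measurable_const (measurable_maxOp g))]
  set E := {x | t < maxOp n g x} ∩ G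
  set I := ∫⁻ x, ENNReal.ofReal |g x|
  choose! c r hr hxB hlt using fun x (hx : x ∈ E) =>
    exists_closedBall_mul_volume_lt_of_lt_maxOp hx.1
  -- Vitali needs bounded radii: a ball on which `|g|` averages more than `t` has volume `< I / t`
  have hR : ∀ x ∈ E, r x ≤ max 1 (I / t).toReal := fun x hx =>
    le_max_one_toReal_of_volume_closedBall_le hn (hr x hx).le (ENNReal.div_ne_top hint ht0) <| by
      rw [ENNReal.le_div_iff_mul_le (Or.inl ht0) (Or.inl ht), mul_comm]
      exact (hlt x hx).le.trans (setLIntegral_le_lintegral _ _)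
  obtain ⟨u, huE, hdisj, hcover⟩ :=
    Vitali.exists_disjoint_subfamily_covering_enlargement_closedBall E c r _ hR 4 (by norm_num)
  have hu : u.Countable :=
    (hdisj.mono fun _ => ball_subset_closedBall).countable_of_isOpen (fun _ _ => isOpen_ball)
      fun a ha => nonempty_ball.2 (hr a (huE ha))
  have := hu.to_subtype
  have hsum : ∑' a : u, ∫⁻ y in closedBall (c a) (r a), ENNReal.ofReal |g y| ≤ I := by
    rw [← lintegral_iUnion (fun _ : u => measurableSet_closedBall)
      fun a b hab => hdisj a.2 b.2 (Subtype.coe_injective.ne hab)]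
    exact setLIntegral_le_lintegral _ _
  calc volume E ≤ volume (⋃ a ∈ u, G ∩ closedBall (c a) (4 * r a)) := by
        refine measure_mono fun x hx => ?_
        obtain ⟨a, ha, hsub⟩ := hcover x hx
        exact mem_biUnion ha ⟨hx.2, hsub (hxB x hx)⟩
    _ ≤ ∑' a : u, volume (G ∩ closedBall (c a) (4 * r a)) := measure_biUnion_le _ hu _
    _ ≤ ∑' a : u, 4 ^ n * ν * (∫⁻ y in closedBall (c a) (r a), ENNReal.ofReal |g y|) / t :=
        ENNReal.tsum_le_tsum fun a =>
          volume_inter_closedBall_four_mul_le hG hg ht0 ht (hr a (huE a.2)) (hlt a (huE a.2))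
    _ = 4 ^ n * ν * (∑' a : u, ∫⁻ y in closedBall (c a) (r a), ENNReal.ofReal |g y|) / t := by
        simp_rw [div_eq_mul_inv, ENNReal.tsum_mul_right, ENNReal.tsum_mul_left]
    _ ≤ 4 ^ n * ν * I / t := by gcongr

theorem restrict_lt_maxOp_le_setLIntegral (hn : n ≠ 0) {G : Set (Fin n → ℝ)}
    (hG : MeasurableSet G) {ν : ℝ≥0∞} {g : (Fin n → ℝ) → ℝ} (hg : Measurable g)
    (hsupp : ∀ x, g x ≠ 0 → maxOp n (G.indicator fun _ => (1 : ℝ)) x ≤ ν)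
    (h2 : ∫⁻ x, ENNReal.ofReal |g x| ^ 2 ≠ ⊤) {t : ℝ} (ht : 0 < t) :
    volume.restrict G {x | ENNReal.ofReal t < maxOp n g x}
      ≤ 4 ^ n * ν * (∫⁻ y in {y | t / 2 < |g y|}, ENNReal.ofReal |g y|)
        / ENNReal.ofReal (t / 2) := by
  set S := {y | t / 2 < |g y|}
  have hS : MeasurableSet S := measurableSet_lt measurable_const hg.abs
  have hint : ∫⁻ y, ENNReal.ofReal |S.indicator g y| = ∫⁻ y in S, ENNReal.ofReal |g y| := by
    rw [← lintegral_indicator hS]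
    exact lintegral_congr fun y => by by_cases hy : y ∈ S <;> simp [hy]
  calc volume.restrict G {x | ENNReal.ofReal t < maxOp n g x}
      ≤ volume.restrict G {x | ENNReal.ofReal (t / 2) < maxOp n (S.indicator g) x} := by
        refine measure_mono fun x hx => ?_
        by_contra hle
        have := (maxOp_le_add_maxOp_indicator hg (by positivity : 0 ≤ t / 2) x).trans
          (add_le_add le_rfl (not_lt.1 hle))
        rw [← ENNReal.ofReal_add (by positivity) (by positivity), add_halves] at this
        exact not_le.2 hx this
    _ ≤ 4 ^ n * ν * (∫⁻ y, ENNReal.ofReal |S.indicator g y|) / ENNReal.ofReal (t / 2) :=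
        restrict_lt_maxOp_le hn hG (fun x hx => hsupp x fun h0 => hx (by simp [h0]))
          (by simpa using ht) ENNReal.ofReal_ne_top
          (hint ▸ setLIntegral_lt_abs_ne_top hg (half_pos ht) h2)
    _ = _ := by rw [hint]

theorem setLIntegral_maxOp_sq_le {G : Set (Fin n → ℝ)} (hG : MeasurableSet G) {ν : ℝ≥0∞}
    {g : (Fin n → ℝ) → ℝ} (hg : Measurable g)
    (hsupp : ∀ x, g x ≠ 0 → maxOp n (G.indicator fun _ => (1 : ℝ)) x ≤ ν)
    (h2 : ∫⁻ x, ENNReal.ofReal |g x| ^ 2 ≠ ⊤) :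
    ∫⁻ x in G, maxOp n g x ^ 2 ≤ 8 * 4 ^ n * ν * ∫⁻ x, ENNReal.ofReal |g x| ^ 2 := by
  -- in dimension `0` the volume of a ball does not bound its radius, but `M` is the identity
  rcases eq_or_ne n 0 with rfl | hn
  · calc ∫⁻ x in G, maxOp 0 g x ^ 2 ≤ ∫⁻ x in G, ν * ENNReal.ofReal |g x| ^ 2 := by
          refine setLIntegral_mono' hG fun x hx => ?_
          rw [maxOp_zero_dim]
          by_cases hgx : g x = 0
          · simp [hgx]
          · have := hsupp x hgx
            rw [maxOp_zero_dim, indicator_of_mem hx] at this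
            exact le_mul_of_one_le_left' (by simpa using this)
      _ ≤ ν * ∫⁻ x, ENNReal.ofReal |g x| ^ 2 := by
          rw [← lintegral_const_mul _ (by fun_prop)]
          exact setLIntegral_le_lintegral _ _
      _ ≤ 8 * 4 ^ 0 * ν * ∫⁻ x, ENNReal.ofReal |g x| ^ 2 := by
          gcongr
          exact le_mul_of_one_le_left' (by norm_num)
  · refine (lintegral_sq_le_of_meas_lt_le (measurable_maxOp g) hg (4 ^ n * ν) fun t ht =>
      restrict_lt_maxOp_le_setLIntegral hn hG hg hsupp h2 ht).trans_eq ?_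
    ring

end MaximalOperator

theorem stmt_6_general (n : ℕ) (α : ℝ) (hα : α < 1 / 2) :
    ∃ C : ℝ, 0 < C ∧
      ∀ (ν : ℝ), 0 < ν → ν ≤ 1 →
        ∀ (G : Set (Fin n → ℝ)), MeasurableSet G →
          ∀ (f : (Fin n → ℝ) → ℝ), Measurable f →
            (∫⁻ x in G,
                (maxOp n (Set.indicator
                  ({x | ENNReal.ofReal ν <
                    maxOp n (Set.indicator G (fun _ => (1 : ℝ))) x}ᶜ) f) x) ^ 2) ^ ((1 : ℝ) / 2) ≤
              ENNReal.ofReal (C * ν ^ α) *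
                (∫⁻ x, ENNReal.ofReal |f x| ^ 2) ^ ((1 : ℝ) / 2) := by
  refine ⟨(8 * 4 ^ n) ^ (1 / 2 : ℝ), by positivity, fun ν hν hν1 G hG f hf => ?_⟩
  set S := {x | ENNReal.ofReal ν < maxOp n (G.indicator fun _ => (1 : ℝ)) x}
  have hS : MeasurableSet S := measurableSet_lt measurable_const (measurable_maxOp _)
  have hgf : ∫⁻ x, ENNReal.ofReal |Sᶜ.indicator f x| ^ 2 ≤ ∫⁻ x, ENNReal.ofReal |f x| ^ 2 :=
    lintegral_mono fun x => by by_cases hx : x ∈ S <;> simp [hx]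
  by_cases hF : ∫⁻ x, ENNReal.ofReal |f x| ^ 2 = ⊤
  · rw [hF, ENNReal.top_rpow_of_pos (by norm_num), ENNReal.mul_top (by positivity)]
    exact le_top
  have hmain := setLIntegral_maxOp_sq_le hG (hf.indicator hS.compl)
    (fun x hx => not_lt.1 fun hxS => hx (indicator_of_notMem (not_not.2 hxS) f))
    (ne_top_of_le_ne_top hF hgf)
  calc _ ≤ (8 * 4 ^ n * ENNReal.ofReal ν * ∫⁻ x, ENNReal.ofReal |f x| ^ 2) ^ (1 / 2 : ℝ) := by
        gcongr
        exact hmain.trans (by gcongr)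
    _ = ENNReal.ofReal ((8 * 4 ^ n) ^ (1 / 2 : ℝ) * ν ^ (1 / 2 : ℝ))
          * (∫⁻ x, ENNReal.ofReal |f x| ^ 2) ^ (1 / 2 : ℝ) := by
        rw [ENNReal.mul_rpow_of_nonneg _ _ (by norm_num), ← Real.mul_rpow (by positivity) hν.le,
          ← ENNReal.ofReal_rpow_of_nonneg (by positivity) (by norm_num),
          ENNReal.ofReal_mul (by positivity)]
        norm_num
    _ ≤ _ := by
        gcongr ENNReal.ofReal (_ * ?_) * _
        exact Real.rpow_le_rpow_of_exponent_ge hν hν1 hα.le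

theorem stmt_6 (n : ℕ) (α : ℝ) (hα0 : 0 ≤ α) (hα : α < 1 / 2) :
    ∃ C : ℝ, 0 < C ∧
      ∀ (ν : ℝ), 0 < ν → ν ≤ 1 →
        ∀ (G : Set (Fin n → ℝ)), MeasurableSet G →
          ∀ (f : (Fin n → ℝ) → ℝ), Measurable f →
            (∫⁻ x in G,
                (maxOp n (Set.indicator
                  ({x | ENNReal.ofReal ν <
                    maxOp n (Set.indicator G (fun _ => (1 : ℝ))) x}ᶜ) f) x) ^ 2) ^ ((1 : ℝ) / 2) ≤
              ENNReal.ofReal (C * ν ^ α) *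
                (∫⁻ x, ENNReal.ofReal |f x| ^ 2) ^ ((1 : ℝ) / 2) :=
  stmt_6_general n α hα
end

section
/- Let $D \geq 2$ be an integer and consider the $D$-adic grid in $\mathbb{R}^n$. Let $\mathcal{J}$ be the set of maximal $D$-adic cubes $J$ such that $100 D J$ does not contain any cube from a fixed nonempty finite collection $\mathcal{H}$ of $D$-adic cubes. Then $\mathcal{J}$ is a partition of $\mathbb{R}^n$, and if $J, J' \in \mathcal{J}$ satisfy $\mathrm{dist}(J, J') \leq 10 \max(\ell(J), \ell(J'))$, then their scales differ by at most 1, i.e. $|s(J) - s(J')| \leq 1$. -/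
/-- The `D`-adic grid cube of scale `s` with index `a`:
`∏_i [D^s a_i, D^s (a_i + 1))`. -/
def DadicCube (n D : ℕ) (s : ℤ) (a : Fin n → ℤ) : Set (Fin n → ℝ) :=
  {x | ∀ i, (D : ℝ) ^ s * (a i) ≤ x i ∧ x i < (D : ℝ) ^ s * (a i + 1)}

/-- The cube concentric with the `D`-adic cube of scale `s` and index `a`,
with `t` times the side length (a closed cube). -/
def dilatedCube (n D : ℕ) (t : ℝ) (s : ℤ) (a : Fin n → ℤ) : Set (Fin n → ℝ) :=
  {x | ∀ i, |x i - ((D : ℝ) ^ s * (a i) + (D : ℝ) ^ s / 2)| ≤ t * (D : ℝ) ^ s / 2}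

namespace Stmt13Aux

noncomputable def idx (n D : ℕ) (s : ℤ) (x : Fin n → ℝ) : Fin n → ℤ :=
  fun i => ⌊x i / (D : ℝ) ^ s⌋

lemma mem_idx {n D : ℕ} (hD : 2 ≤ D) (s : ℤ) (x : Fin n → ℝ) :
    x ∈ DadicCube n D s (idx n D s x) := by
  have hD2 : (2:ℝ) ≤ (D:ℝ) := by exact_mod_cast hD
  have hP : (0:ℝ) < (D:ℝ) ^ s := zpow_pos (by linarith) s
  intro i
  constructor
  · rw [mul_comm, ← le_div_iff₀ hP]
    exact Int.floor_le _
  · rw [mul_comm, ← div_lt_iff₀ hP]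
    push_cast
    exact Int.lt_floor_add_one _

lemma eq_idx {n D : ℕ} (hD : 2 ≤ D) {s : ℤ} {a : Fin n → ℤ} {x : Fin n → ℝ}
    (hx : x ∈ DadicCube n D s a) : a = idx n D s x := by
  have hD2 : (2:ℝ) ≤ (D:ℝ) := by exact_mod_cast hD
  have hP : (0:ℝ) < (D:ℝ) ^ s := zpow_pos (by linarith) s
  funext i
  obtain ⟨h1, h2⟩ := hx i
  symm
  rw [idx, Int.floor_eq_iff]
  constructor
  · rw [le_div_iff₀ hP]; linarith [h1]
  · rw [div_lt_iff₀ hP]; push_cast; linarith [h2]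

lemma corner_mem {n D : ℕ} (hD : 2 ≤ D) (s : ℤ) (a : Fin n → ℤ) :
    (fun i => (D:ℝ)^s * (a i)) ∈ DadicCube n D s a := by
  have hD2 : (2:ℝ) ≤ (D:ℝ) := by exact_mod_cast hD
  have hP : (0:ℝ) < (D:ℝ) ^ s := zpow_pos (by linarith) s
  intro i
  refine ⟨le_refl _, ?_⟩
  have h : (a i : ℝ) < (a i : ℝ) + 1 := by linarith
  exact mul_lt_mul_of_pos_left h hP

lemma cube_subset {n D : ℕ} (hD : 2 ≤ D) {s s' : ℤ} (hss : s ≤ s')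
    {a a' : Fin n → ℤ} {x : Fin n → ℝ}
    (hx : x ∈ DadicCube n D s a) (hx' : x ∈ DadicCube n D s' a') :
    DadicCube n D s a ⊆ DadicCube n D s' a' := by
  have hD2 : (2:ℝ) ≤ (D:ℝ) := by exact_mod_cast hD
  have hD0 : (0:ℝ) < (D:ℝ) := by linarith
  have hP : (0:ℝ) < (D:ℝ) ^ s := zpow_pos hD0 s
  set m : ℤ := (D:ℤ) ^ (s' - s).toNat with hm
  have hMcast : ((m:ℝ)) = (D:ℝ) ^ (s' - s) := by
    rw [hm]
    push_cast
    rw [← zpow_natCast (D:ℝ) (s' - s).toNat, Int.toNat_of_nonneg (by omega)]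
  have hsplit : (D:ℝ) ^ s' = (D:ℝ) ^ s * (m:ℝ) := by
    rw [hMcast, ← zpow_add₀ (ne_of_gt hD0)]
    congr 1; omega
  intro y hy i
  obtain ⟨h1, h2⟩ := hx i
  obtain ⟨h1', h2'⟩ := hx' i
  obtain ⟨g1, g2⟩ := hy i
  rw [hsplit] at h1' h2' ⊢
  -- integer inequalities
  have k1 : m * a' i ≤ a i := by
    have : ((m * a' i : ℤ) : ℝ) < (a i : ℝ) + 1 := by
      push_cast
      nlinarith [h1', h2]
    have := Int.lt_add_one_iff.mp (by exact_mod_cast this)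
    exact this
  have k2 : a i + 1 ≤ m * (a' i + 1) := by
    have : (a i : ℝ) < ((m * (a' i + 1) : ℤ) : ℝ) := by
      push_cast
      nlinarith [h1, h2']
    exact Int.add_one_le_iff.mpr (by exact_mod_cast this)
  have e1 : (D:ℝ)^s * ((m:ℝ) * (a' i)) ≤ (D:ℝ)^s * (a i) :=
    mul_le_mul_of_nonneg_left (by exact_mod_cast k1) hP.le
  have e2 : (D:ℝ)^s * ((a i : ℝ) + 1) ≤ (D:ℝ)^s * ((m:ℝ) * ((a' i : ℝ) + 1)) :=
    mul_le_mul_of_nonneg_left (by exact_mod_cast k2) hP.le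
  rw [mul_assoc, mul_assoc]
  constructor
  · linarith
  · linarith

lemma center_dist {n D : ℕ} (hD : 2 ≤ D) {s : ℤ} {a : Fin n → ℤ} {x : Fin n → ℝ}
    (hx : x ∈ DadicCube n D s a) (i : Fin n) :
    |x i - ((D:ℝ)^s * (a i) + (D:ℝ)^s / 2)| ≤ (D:ℝ)^s / 2 := by
  obtain ⟨h1, h2⟩ := hx i
  rw [abs_le]
  constructor <;> nlinarith

end Stmt13Aux

/-- The maximal `D`-adic cubes `J` such that `100 D J` contains no cube from a fixed
nonempty finite collection `𝓗` partition `ℝ^n`, and adjacent cubes of this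
partition have scales differing by at most `1` (a Whitney-type property). -/
theorem stmt_13 (n D : ℕ) (hn : 1 ≤ n) (hD : 2 ≤ D)
    (𝓗 : Set (ℤ × (Fin n → ℤ))) (hne : 𝓗.Nonempty) (hfin : 𝓗.Finite)
    -- `good p` : the cube `100 D J_p` contains no cube of `𝓗`
    (good : ℤ × (Fin n → ℤ) → Prop)
    (hgood : ∀ p, good p ↔ ∀ q ∈ 𝓗, ¬ DadicCube n D q.1 q.2 ⊆ dilatedCube n D (100 * D) p.1 p.2)
    -- `maxGood p` : `J_p` is good and maximal among good `D`-adic cubes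
    (maxGood : ℤ × (Fin n → ℤ) → Prop)
    (hmaxGood : ∀ p, maxGood p ↔ good p ∧
      ∀ q : ℤ × (Fin n → ℤ), DadicCube n D p.1 p.2 ⊆ DadicCube n D q.1 q.2 →
        p.1 < q.1 → ¬ good q) :
    -- the maximal good cubes form a partition of ℝ^n
    (∀ x : Fin n → ℝ, ∃! p : ℤ × (Fin n → ℤ), maxGood p ∧ x ∈ DadicCube n D p.1 p.2) ∧
    -- Whitney property: nearby cubes of the partition have comparable scales
    (∀ p q : ℤ × (Fin n → ℤ), maxGood p → maxGood q →
      sInf {t : ℝ | ∃ x ∈ DadicCube n D p.1 p.2, ∃ y ∈ DadicCube n D q.1 q.2, t = dist x y} ≤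
        10 * max ((D : ℝ) ^ p.1) ((D : ℝ) ^ q.1) →
      |p.1 - q.1| ≤ 1) := by
  have hD2 : (2:ℝ) ≤ (D:ℝ) := by exact_mod_cast hD
  have hD0 : (0:ℝ) < (D:ℝ) := by linarith
  have hD1 : (1:ℝ) < (D:ℝ) := by linarith
  have hPpos : ∀ s : ℤ, (0:ℝ) < (D:ℝ)^s := fun s => zpow_pos hD0 s
  -- lower bound on scales of 𝓗
  obtain ⟨m0, hm0⟩ : ∃ m0 : ℤ, ∀ h ∈ 𝓗, m0 ≤ h.1 := by
    obtain ⟨b, hb⟩ := (hfin.image Prod.fst).bddBelow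
    exact ⟨b, fun h hh => hb (Set.mem_image_of_mem _ hh)⟩
  -- small scales are good
  have hsmall : ∀ (x : Fin n → ℝ) (s : ℤ), s ≤ m0 - 9 → good (s, Stmt13Aux.idx n D s x) := by
    intro x s hs
    rw [hgood]
    rintro h hh hsub
    have i0 : Fin n := ⟨0, hn⟩
    have hy1 : (fun i => (D:ℝ)^h.1 * (h.2 i)) ∈ DadicCube n D h.1 h.2 :=
      Stmt13Aux.corner_mem hD _ _
    have hy2 : (fun i => (D:ℝ)^h.1 * (h.2 i) + (D:ℝ)^h.1/2) ∈ DadicCube n D h.1 h.2 := by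
      intro i
      constructor
      · simp only
        linarith [hPpos h.1]
      · simp only
        nlinarith [hPpos h.1]
    have b1 : |(D:ℝ)^h.1 * (h.2 i0) -
        ((D:ℝ)^s * ((Stmt13Aux.idx n D s x) i0) + (D:ℝ)^s/2)| ≤ (100 * (D:ℝ)) * (D:ℝ)^s / 2 :=
      hsub hy1 i0
    have b2 : |(D:ℝ)^h.1 * (h.2 i0) + (D:ℝ)^h.1/2 -
        ((D:ℝ)^s * ((Stmt13Aux.idx n D s x) i0) + (D:ℝ)^s/2)| ≤ (100 * (D:ℝ)) * (D:ℝ)^s / 2 :=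
      hsub hy2 i0
    rw [abs_le] at b1 b2
    have hmono : (D:ℝ)^(s+9) ≤ (D:ℝ)^h.1 :=
      zpow_le_zpow_right₀ hD1.le (by have := hm0 h hh; omega)
    have f1 : (D:ℝ)^(s+1) = (D:ℝ)^s * (D:ℝ) := by
      rw [zpow_add₀ hD0.ne', zpow_one]
    have f2 : (D:ℝ)^(s+9) = (D:ℝ)^(s+1) * (D:ℝ)^(8:ℤ) := by
      have e : s + 9 = s + 1 + 8 := by ring
      rw [e, zpow_add₀ hD0.ne']
    have f3 : (256:ℝ) ≤ (D:ℝ)^(8:ℤ) := by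
      have h28 : (2:ℝ)^(8:ℕ) ≤ (D:ℝ)^(8:ℕ) := pow_le_pow_left₀ (by norm_num) hD2 8
      have : ((8:ℤ) : ℤ) = ((8:ℕ) : ℤ) := by norm_num
      rw [show ((8:ℤ)) = ((8:ℕ) : ℤ) from rfl, zpow_natCast]
      norm_num at h28 ⊢
      linarith
    have f4 : (D:ℝ)^(s+1) * 256 ≤ (D:ℝ)^(s+1) * (D:ℝ)^(8:ℤ) :=
      mul_le_mul_of_nonneg_left f3 (hPpos (s+1)).le
    linarith [hPpos s, hPpos (s+1), hPpos h.1, b1.1, b1.2, b2.1, b2.2]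
  -- large scales are not good
  have hlarge : ∀ x : Fin n → ℝ, ∃ s1 : ℤ, ∀ s : ℤ, s1 ≤ s →
      ¬ good (s, Stmt13Aux.idx n D s x) := by
    intro x
    obtain ⟨h, hh⟩ := hne
    have hNE : Nonempty (Fin n) := ⟨⟨0, hn⟩⟩
    set C : ℝ := Finset.univ.sup' Finset.univ_nonempty
      (fun i => |x i| + (D:ℝ)^h.1 * (|(h.2 i : ℝ)| + 1)) with hC
    obtain ⟨N, hN⟩ := pow_unbounded_of_one_lt C hD1
    refine ⟨(N:ℤ), fun s hs hg => ?_⟩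
    rw [hgood] at hg
    refine hg h hh ?_
    intro y hy i
    have hyi := hy i
    have e1 := mul_le_mul_of_nonneg_left (neg_abs_le ((h.2 i : ℝ))) (hPpos h.1).le
    have e2 := mul_le_mul_of_nonneg_left (le_abs_self ((h.2 i : ℝ))) (hPpos h.1).le
    have hyb : |y i| ≤ (D:ℝ)^h.1 * (|(h.2 i : ℝ)| + 1) := by
      rw [abs_le]
      constructor
      · nlinarith [hyi.1, hPpos h.1]
      · nlinarith [hyi.2, hPpos h.1]
    have hxc := Stmt13Aux.center_dist hD (Stmt13Aux.mem_idx hD s x) i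
    have hCi : |x i| + (D:ℝ)^h.1 * (|(h.2 i : ℝ)| + 1) ≤ C := by
      rw [hC]
      exact Finset.le_sup' (fun i => |x i| + (D:ℝ)^h.1 * (|(h.2 i : ℝ)| + 1))
        (Finset.mem_univ i)
    have hDs : (D:ℝ)^((N:ℤ)) ≤ (D:ℝ)^s := zpow_le_zpow_right₀ hD1.le hs
    have hDN : C < (D:ℝ)^((N:ℤ)) := by rw [zpow_natCast]; exact hN
    have hdd : 2 * (D:ℝ)^s ≤ (D:ℝ) * (D:ℝ)^s :=
      mul_le_mul_of_nonneg_right hD2 (hPpos s).le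
    rw [abs_le] at hxc ⊢
    constructor
    · nlinarith [neg_abs_le (x i), le_abs_self (x i), neg_abs_le (y i), hxc.1, hPpos s]
    · nlinarith [neg_abs_le (x i), le_abs_self (x i), le_abs_self (y i), hxc.2, hPpos s]
  -- the key Whitney lemma
  have key : ∀ p q : ℤ × (Fin n → ℤ), maxGood p → maxGood q →
      (∃ x ∈ DadicCube n D p.1 p.2, ∃ y ∈ DadicCube n D q.1 q.2,
        dist x y ≤ 11 * (D:ℝ)^p.1) → q.1 + 2 ≤ p.1 → False := by
    rintro p q hp hq ⟨x, hx, y, hy, hdist⟩ hlt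
    have hgp := ((hmaxGood p).mp hp).1
    have hyb' : y ∈ DadicCube n D (q.1 + 1) (Stmt13Aux.idx n D (q.1 + 1) y) :=
      Stmt13Aux.mem_idx hD _ y
    have hsub : DadicCube n D q.1 q.2 ⊆ DadicCube n D (q.1+1) (Stmt13Aux.idx n D (q.1+1) y) :=
      Stmt13Aux.cube_subset hD (by omega) hy hyb'
    have hng : ¬ good (q.1 + 1, Stmt13Aux.idx n D (q.1 + 1) y) :=
      ((hmaxGood q).mp hq).2 _ hsub (by omega)
    rw [hgood] at hng
    push_neg at hng
    obtain ⟨h, hh, hhsub⟩ := hng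
    rw [hgood] at hgp
    refine hgp h hh (hhsub.trans ?_)
    intro u hu i
    have hu' := hu i
    have hcy := Stmt13Aux.center_dist hD hyb' i
    have hcx := Stmt13Aux.center_dist hD hx i
    have hxy : |x i - y i| ≤ 11 * (D:ℝ)^p.1 := by
      have h1 := dist_le_pi_dist x y i
      rw [Real.dist_eq] at h1
      linarith
    have m1 : (D:ℝ)^(q.1+1) ≤ (D:ℝ)^p.1 := zpow_le_zpow_right₀ hD1.le (by omega)
    have m2 : (D:ℝ)^(q.1+1) * (D:ℝ) ≤ (D:ℝ)^p.1 := by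
      have h2 : (D:ℝ)^(q.1+1+1) ≤ (D:ℝ)^p.1 := zpow_le_zpow_right₀ hD1.le (by omega)
      rw [zpow_add₀ hD0.ne', zpow_one] at h2
      linarith
    have m3 : 2 * (D:ℝ)^p.1 ≤ (D:ℝ)^p.1 * (D:ℝ) := by nlinarith [hPpos p.1]
    rw [abs_le] at hu' hcy hcx hxy ⊢
    constructor <;> linarith [hPpos (q.1+1), hPpos p.1, hu'.1, hu'.2, hcy.1, hcy.2,
      hcx.1, hcx.2, hxy.1, hxy.2]
  constructor
  · -- partition
    intro x
    obtain ⟨s1, hs1⟩ := hlarge x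
    obtain ⟨S, hSg, hSub⟩ := Int.exists_greatest_of_bdd
      (P := fun s => good (s, Stmt13Aux.idx n D s x))
      ⟨s1, fun z hz => by by_contra hc; push_neg at hc; exact hs1 z (by omega) hz⟩
      ⟨m0 - 9, hsmall x _ le_rfl⟩
    refine ⟨(S, Stmt13Aux.idx n D S x), ⟨?_, Stmt13Aux.mem_idx hD S x⟩, ?_⟩
    · rw [hmaxGood]
      refine ⟨hSg, ?_⟩
      intro r hsub hlt hgr
      have hxr : x ∈ DadicCube n D r.1 r.2 := hsub (Stmt13Aux.mem_idx hD S x)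
      have hre : r.2 = Stmt13Aux.idx n D r.1 x := Stmt13Aux.eq_idx hD hxr
      have hgr' : good (r.1, Stmt13Aux.idx n D r.1 x) := by rw [← hre]; exact hgr
      have := hSub r.1 hgr'
      omega
    · rintro p' ⟨hp', hxp'⟩
      have hidx : p'.2 = Stmt13Aux.idx n D p'.1 x := Stmt13Aux.eq_idx hD hxp'
      have hgp' : good (p'.1, Stmt13Aux.idx n D p'.1 x) := by
        rw [← hidx]; exact ((hmaxGood p').mp hp').1
      have hle : p'.1 ≤ S := hSub p'.1 hgp'
      rcases eq_or_lt_of_le hle with heq | hlt2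
      · rw [Prod.ext_iff]
        exact ⟨heq, by rw [hidx, heq]⟩
      · exfalso
        have hsub2 : DadicCube n D p'.1 p'.2 ⊆ DadicCube n D S (Stmt13Aux.idx n D S x) :=
          Stmt13Aux.cube_subset hD hlt2.le hxp' (Stmt13Aux.mem_idx hD S x)
        exact ((hmaxGood p').mp hp').2 _ hsub2 hlt2 hSg
  · -- Whitney
    intro p q hp hq hinf
    have hSne : Set.Nonempty
        {t : ℝ | ∃ x ∈ DadicCube n D p.1 p.2, ∃ y ∈ DadicCube n D q.1 q.2, t = dist x y} :=
      ⟨dist (fun i => (D:ℝ)^p.1 * (p.2 i)) (fun i => (D:ℝ)^q.1 * (q.2 i)),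
        _, Stmt13Aux.corner_mem hD _ _, _, Stmt13Aux.corner_mem hD _ _, rfl⟩
    have hM : 0 < max ((D:ℝ)^p.1) ((D:ℝ)^q.1) := lt_max_of_lt_left (hPpos p.1)
    have hlt : sInf {t : ℝ | ∃ x ∈ DadicCube n D p.1 p.2, ∃ y ∈ DadicCube n D q.1 q.2,
        t = dist x y} < 11 * max ((D:ℝ)^p.1) ((D:ℝ)^q.1) := by linarith
    obtain ⟨t0, ht0S, ht0⟩ := exists_lt_of_csInf_lt hSne hlt
    obtain ⟨x, hx, y, hy, heq⟩ := ht0S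
    by_contra hcon
    have hcases : q.1 + 2 ≤ p.1 ∨ p.1 + 2 ≤ q.1 := by
      by_contra hno
      push_neg at hno
      exact hcon (by rw [abs_le]; omega)
    rcases hcases with hc | hc
    · have hmax : max ((D:ℝ)^p.1) ((D:ℝ)^q.1) = (D:ℝ)^p.1 :=
        max_eq_left (zpow_le_zpow_right₀ hD1.le (by omega))
      exact key p q hp hq ⟨x, hx, y, hy, by rw [← heq]; rw [hmax] at ht0; linarith⟩ hc
    · have hmax : max ((D:ℝ)^p.1) ((D:ℝ)^q.1) = (D:ℝ)^q.1 :=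
        max_eq_right (zpow_le_zpow_right₀ hD1.le (by omega))
      exact key q p hq hp ⟨y, hy, x, hx, by
        rw [dist_comm, ← heq]; rw [hmax] at ht0; linarith⟩ hc
end
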